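/- arXiv:1908.09189 — 8 statements merged into one kernel-verified Lean document; each statement's English description precedes it below -/
import Mathlib

section
/- For 0 < α < 1, the function z ↦ ψ(z) - (e^z - 1) z^{-2-α} extends to an analytic function on the strip {w ∈ ℂ : |Im w| < 2π}. -/
/-!
The `k = 0` term of the series defining `ψ` is exactly `(e^z - 1) z^{-2-α}`, so the difference is
`(e^z - 1) ∑_{k ≠ 0} (z + 2kπi)^{-2-α}`. On the narrower strip `|Im w| ≤ 2π - ε` every `k ≠ 0`
term has modulus at most `(ε|k|)^{-2-α}`, which is summable; hence the tail is a locally uniform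
limit of holomorphic functions (each `z + 2kπi` stays off the branch cut) and is holomorphic on
the whole strip.
-/

open Complex Real

def slit : Set ℂ := {z : ℂ | z.re ≤ 0 ∧ z.im = 0}

noncomputable def psi (α : ℝ) (z : ℂ) : ℂ :=
  (Complex.exp z - 1) *
    ∑' k : ℤ, (z + 2 * (k : ℂ) * (π : ℂ) * Complex.I) ^ (((-(2 + α) : ℝ)) : ℂ)

noncomputable def shiftedCpow (s : ℝ) (z : ℂ) (k : ℤ) : ℂ :=
  (z + 2 * (k : ℂ) * (π : ℂ) * I) ^ ((-s : ℝ) : ℂ)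

noncomputable def shiftedCpowTail (s : ℝ) (z : ℂ) : ℂ :=
  ∑' k : {k : ℤ // k ≠ 0}, shiftedCpow s z k

lemma mul_abs_le_abs_im_add_two_int_mul_pi {ε : ℝ} {w : ℂ} (hw : |w.im| ≤ 2 * π - ε)
    {k : ℤ} (hk : k ≠ 0) : ε * |(k : ℝ)| ≤ |w.im + 2 * k * π| := by
  have hk1 : (1 : ℝ) ≤ |(k : ℝ)| := by exact_mod_cast Int.one_le_abs hk
  have h2kπ : |2 * (k : ℝ) * π| = 2 * π * |(k : ℝ)| := by
    rw [abs_mul, abs_mul, abs_two, abs_of_pos pi_pos]; ring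
  have h := abs_sub_abs_le_abs_add (2 * (k : ℝ) * π) w.im
  rw [add_comm] at h
  nlinarith [mul_nonneg ((abs_nonneg w.im).trans hw) (sub_nonneg.mpr hk1)]

lemma im_add_two_int_mul_pi_I (w : ℂ) (k : ℤ) :
    (w + 2 * (k : ℂ) * (π : ℂ) * I).im = w.im + 2 * k * π := by
  simp

lemma mul_abs_le_norm_add_two_int_mul_pi_I {ε : ℝ} {w : ℂ} (hw : |w.im| ≤ 2 * π - ε)
    {k : ℤ} (hk : k ≠ 0) : ε * |(k : ℝ)| ≤ ‖w + 2 * (k : ℂ) * (π : ℂ) * I‖ :=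
  (mul_abs_le_abs_im_add_two_int_mul_pi hw hk).trans <|
    im_add_two_int_mul_pi_I w k ▸ abs_im_le_norm _

lemma add_two_int_mul_pi_I_mem_slitPlane {w : ℂ} (hw : |w.im| < 2 * π) {k : ℤ} (hk : k ≠ 0) :
    w + 2 * (k : ℂ) * (π : ℂ) * I ∈ slitPlane := by
  refine Or.inr (im_add_two_int_mul_pi_I w k ▸ abs_pos.mp ?_)
  have := mul_abs_le_abs_im_add_two_int_mul_pi (ε := 2 * π - |w.im|) (by linarith) hk
  have hk1 : (1 : ℝ) ≤ |(k : ℝ)| := by exact_mod_cast Int.one_le_abs hk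
  nlinarith

lemma norm_shiftedCpow_le {s ε : ℝ} (hs : 0 ≤ s) (hε : 0 < ε) {w : ℂ} (hw : |w.im| ≤ 2 * π - ε)
    {k : ℤ} (hk : k ≠ 0) : ‖shiftedCpow s w k‖ ≤ (ε * |(k : ℝ)|) ^ (-s) := by
  have hk1 : (1 : ℝ) ≤ |(k : ℝ)| := by exact_mod_cast Int.one_le_abs hk
  rw [shiftedCpow, norm_cpow_real]
  exact rpow_le_rpow_of_nonpos (by positivity) (mul_abs_le_norm_add_two_int_mul_pi_I hw hk)
    (by linarith)

lemma summable_mul_abs_int_rpow {s : ℝ} (hs : 1 < s) {ε : ℝ} (hε : 0 < ε) :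
    Summable fun k : ℤ => (ε * |(k : ℝ)|) ^ (-s) :=
  ((summable_abs_int_rpow hs).mul_left (ε ^ (-s))).congr fun k => by
    rw [mul_rpow hε.le (abs_nonneg _)]

lemma summable_shiftedCpow {s : ℝ} (hs : 1 < s) {w : ℂ} (hw : |w.im| < 2 * π) :
    Summable (shiftedCpow s w) := by
  have hε : 0 < 2 * π - |w.im| := by linarith
  refine (summable_mul_abs_int_rpow hs hε).of_norm_bounded_eventually ?_
  filter_upwards [(Set.finite_singleton (0 : ℤ)).compl_mem_cofinite] with k hk
  exact norm_shiftedCpow_le (by linarith) hε (by linarith) hk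

lemma tsum_shiftedCpow {s : ℝ} (hs : 1 < s) {w : ℂ} (hw : |w.im| < 2 * π) :
    ∑' k, shiftedCpow s w k = w ^ ((-s : ℝ) : ℂ) + shiftedCpowTail s w := by
  rw [← (summable_shiftedCpow hs hw).tsum_subtype_add_tsum_subtype_compl {0}, tsum_singleton]
  congr 1
  simp [shiftedCpow]

lemma differentiableOn_shiftedCpowTail {s : ℝ} (hs : 1 < s) :
    DifferentiableOn ℂ (shiftedCpowTail s) {w : ℂ | |w.im| < 2 * π} := by
  intro z (hz : |z.im| < 2 * π)
  obtain ⟨ε, hε, hzε⟩ : ∃ ε > 0, |z.im| < 2 * π - ε :=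
    ⟨(2 * π - |z.im|) / 2, by linarith, by linarith⟩
  set U := {w : ℂ | |w.im| < 2 * π - ε}
  have hU : IsOpen U := isOpen_lt continuous_im.abs continuous_const
  have hzU : z ∈ U := hzε
  refine (DifferentiableOn.differentiableAt ?_ (hU.mem_nhds hzU)).differentiableWithinAt
  refine differentiableOn_tsum_of_summable_norm ((summable_mul_abs_int_rpow hs hε).subtype _)
    (fun k w hw => ?_) hU (fun k w hw => norm_shiftedCpow_le (by linarith) hε hw.le k.2)
  have hw' : |w.im| < 2 * π := by linarith [show |w.im| < 2 * π - ε from hw]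
  exact ((differentiableAt_id.add_const _).cpow (differentiableAt_const _)
    (add_two_int_mul_pi_I_mem_slitPlane hw' k.2)).differentiableWithinAt

theorem stmt2_general (α : ℝ) (hα0 : 0 < α) :
    ∃ g : ℂ → ℂ, DifferentiableOn ℂ g {w : ℂ | |w.im| < 2 * π} ∧
      ∀ z : ℂ, z ∉ slit → |z.im| < 2 * π →
        g z = psi α z - (Complex.exp z - 1) * z ^ (((-(2 + α) : ℝ)) : ℂ) := by
  have hs : 1 < 2 + α := by linarith
  refine ⟨fun z => (exp z - 1) * shiftedCpowTail (2 + α) z,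
    (Complex.differentiable_exp.sub_const 1).differentiableOn.mul
      (differentiableOn_shiftedCpowTail hs),
    fun z _ hz => ?_⟩
  change _ = (exp z - 1) * ∑' k, shiftedCpow (2 + α) z k - _
  rw [tsum_shiftedCpow hs hz]
  ring

/-- For `0 < α < 1`, `z ↦ ψ(z) - (e^z - 1) z^{-2-α}` extends to an analytic function on
the strip `{w : |Im w| < 2π}`. -/
theorem stmt2 (α : ℝ) (hα0 : 0 < α) (hα1 : α < 1) :
    ∃ g : ℂ → ℂ, DifferentiableOn ℂ g {w : ℂ | |w.im| < 2 * π} ∧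
      ∀ z : ℂ, z ∉ slit → |z.im| < 2 * π →
        g z = psi α z - (Complex.exp z - 1) * z ^ (((-(2 + α) : ℝ)) : ℂ) :=
  stmt2_general α hα0
end

section
/- For 0 < α < 1, lim_{r→0+} ψ(re^{iθ}) / (r^{-1-α}(cos((1+α)θ) - i sin((1+α)θ))) = 1, uniformly in θ ∈ (-π, π). Equivalently, ψ(z) · z^{2+α}/(e^z - 1) → 1 as z → 0 in ℂ \ (-∞,0]. -/
open Complex Real Filter

/-- For `0 < α < 1`, `ψ(z) · z^{2+α} / (e^z - 1) → 1` as `z → 0` in `ℂ \ (-∞,0]`;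
equivalently `ψ(re^{iθ}) / (r^{-1-α}(cos((1+α)θ) - i sin((1+α)θ))) → 1` as `r → 0+`,
uniformly in `θ ∈ (-π,π)`. -/
theorem stmt3 (α : ℝ) (hα0 : 0 < α) (hα1 : α < 1) :
    Tendsto (fun z : ℂ => psi α z * z ^ (((2 + α : ℝ)) : ℂ) / (Complex.exp z - 1))
      (nhdsWithin 0 slitᶜ) (nhds 1) := by
  have hπ1 : (1:ℝ) < π := by linarith [Real.pi_gt_three]
  set a : ℝ := 2 + α with ha
  have ha1 : (1:ℝ) < a := by simp [ha]; linarith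
  have ha0 : (0:ℝ) < a := by linarith
  -- bound function and its sum
  have hsum : Summable (fun k : ℤ => (π * |(k:ℝ)|) ^ (-a)) := by
    have h1 : Summable (fun k : ℤ => π ^ (-a) * |(k:ℝ)| ^ (-a)) :=
      (Real.summable_abs_int_rpow ha1).mul_left _
    refine h1.congr fun k => ?_
    rw [← Real.mul_rpow Real.pi_pos.le (abs_nonneg _)]
  set C : ℝ := ∑' k : ℤ, (π * |(k:ℝ)|) ^ (-a) with hC
  have hC0 : 0 ≤ C := tsum_nonneg fun k => Real.rpow_nonneg (by positivity) _
  -- key eventual bound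
  have hev : ∀ᶠ z in nhdsWithin 0 slitᶜ,
      ‖psi α z * z ^ ((a:ℝ) : ℂ) / (Complex.exp z - 1) - 1‖ ≤ C * ‖z‖ ^ a := by
    have hball : ∀ᶠ z in nhdsWithin 0 slitᶜ, ‖z‖ < 1 := by
      apply eventually_nhdsWithin_of_eventually_nhds
      have := Metric.ball_mem_nhds (0:ℂ) one_pos
      filter_upwards [this] with z hz
      simpa [Metric.mem_ball, Complex.dist_eq] using hz
    filter_upwards [hball, eventually_mem_nhdsWithin] with z hz1 hzs
    -- z ≠ 0
    have hz0 : z ≠ 0 := by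
      rintro rfl
      exact hzs ⟨le_refl 0, rfl⟩
    -- exp z ≠ 1
    have hexp : Complex.exp z - 1 ≠ 0 := by
      rw [sub_ne_zero]
      intro h
      rw [Complex.exp_eq_one_iff] at h
      obtain ⟨n, hn⟩ := h
      have hn0 : n ≠ 0 := by rintro rfl; simp at hn; exact hz0 hn
      have habsz : ‖z‖ = |(n:ℝ)| * (2 * π) := by
        rw [hn]
        simp [map_mul,
          _root_.abs_of_nonneg Real.pi_pos.le]
        try ring
      have h1 : (1:ℝ) ≤ |(n:ℝ)| := by
        have := Int.one_le_abs hn0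
        calc (1:ℝ) = ((1:ℤ):ℝ) := by norm_num
        _ ≤ ((|n|:ℤ):ℝ) := by exact_mod_cast this
        _ = |(n:ℝ)| := by push_cast; rfl
      nlinarith [Real.pi_pos]
    set g : ℤ → ℂ := fun k => (z + 2 * (k : ℂ) * (π : ℂ) * Complex.I) ^ ((-a : ℝ) : ℂ) with hg
    -- lower bound for |z + 2kπi|, k ≠ 0
    have habs : ∀ k : ℤ, k ≠ 0 → π * |(k:ℝ)| ≤ ‖z + 2 * (k : ℂ) * (π : ℂ) * Complex.I‖ := by
      intro k hk
      have hk1 : (1:ℝ) ≤ |(k:ℝ)| := by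
        have := Int.one_le_abs hk
        calc (1:ℝ) = ((1:ℤ):ℝ) := by norm_num
        _ ≤ ((|k|:ℤ):ℝ) := by exact_mod_cast this
        _ = |(k:ℝ)| := by push_cast; rfl
      have h2 : ‖2 * (k : ℂ) * (π : ℂ) * Complex.I‖ = 2 * |(k:ℝ)| * π := by
        simp [map_mul,
          _root_.abs_of_nonneg Real.pi_pos.le]
        try ring
      have h3 : 2 * |(k:ℝ)| * π ≤ ‖z + 2 * (k : ℂ) * (π : ℂ) * Complex.I‖
          + ‖z‖ := by
        calc 2 * |(k:ℝ)| * π = ‖2 * (k : ℂ) * (π : ℂ) * Complex.I‖ := h2.symm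
          _ = ‖(z + 2 * (k : ℂ) * (π : ℂ) * Complex.I) - z‖ := by ring_nf
          _ ≤ _ := by
              have := norm_sub_le (z + 2 * (k : ℂ) * (π : ℂ) * Complex.I) z
              simpa using this
      nlinarith
    have hne : ∀ k : ℤ, k ≠ 0 → z + 2 * (k : ℂ) * (π : ℂ) * Complex.I ≠ 0 := by
      intro k hk h
      have := habs k hk
      rw [h] at this
      simp at this
      have hk1 : (1:ℝ) ≤ |(k:ℝ)| := by
        have := Int.one_le_abs hk
        calc (1:ℝ) = ((1:ℤ):ℝ) := by norm_num
        _ ≤ ((|k|:ℤ):ℝ) := by exact_mod_cast this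
        _ = |(k:ℝ)| := by push_cast; rfl
      nlinarith [Real.pi_pos]
    -- norm bound on the ite-modified terms
    have hbd : ∀ k : ℤ, ‖(if k = 0 then 0 else g k)‖ ≤ (π * |(k:ℝ)|) ^ (-a) := by
      intro k
      by_cases hk : k = 0
      · simp [hk, Real.rpow_nonneg]
      · simp only [if_neg hk]
        rw [hg]
        have hnz := hne k hk
        rw [Complex.norm_cpow_of_ne_zero hnz]
        simp only [Complex.ofReal_re, Complex.ofReal_im, mul_zero, Real.exp_zero, div_one]
        exact Real.rpow_le_rpow_of_nonpos (by positivity) (habs k hk) (by linarith)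
    have hsg' : Summable (fun k : ℤ => if k = 0 then 0 else g k) :=
      Summable.of_norm_bounded hsum hbd
    have hsg : Summable g := by
      have : g = (fun k : ℤ => if k = 0 then 0 else g k) + (fun k : ℤ => if k = 0 then g 0 else 0) := by
        funext k; by_cases hk : k = 0 <;> simp [hk]
      rw [this]
      exact hsg'.add (summable_of_ne_finset_zero (s := {0}) (by intro k hk; simp at hk; simp [hk]))
    -- split the sum
    have hsplit : (∑' k : ℤ, g k) = g 0 + ∑' k : ℤ, if k = 0 then 0 else g k :=
      Summable.tsum_eq_add_tsum_ite hsg 0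
    -- the function equals 1 + T * z^a
    have hzw : z ^ ((-a : ℝ) : ℂ) * z ^ ((a : ℝ) : ℂ) = 1 := by
      have h1 : ((-a : ℝ) : ℂ) = -((a : ℝ) : ℂ) := by push_cast; ring
      rw [h1, Complex.cpow_neg]
      refine inv_mul_cancel₀ ?_
      simp [Complex.cpow_eq_zero_iff, hz0]
    have hg0 : g 0 = z ^ ((-a : ℝ) : ℂ) := by simp [hg]
    have hfeq : psi α z * z ^ ((a:ℝ) : ℂ) / (Complex.exp z - 1) - 1
        = (∑' k : ℤ, if k = 0 then 0 else g k) * z ^ ((a : ℝ) : ℂ) := by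
      have hpsi : psi α z = (Complex.exp z - 1) * ∑' k : ℤ, g k := rfl
      rw [hpsi, hsplit, hg0, mul_rotate, mul_div_assoc, div_self hexp, mul_one, add_mul, hzw]
      ring
    rw [hfeq]
    rw [norm_mul]
    have hT : ‖∑' k : ℤ, if k = 0 then 0 else g k‖ ≤ C :=
      le_trans (norm_tsum_le_tsum_norm (hsg'.norm)) (Summable.tsum_le_tsum hbd hsg'.norm hsum)
    have hza : ‖z ^ ((a : ℝ) : ℂ)‖ = ‖z‖ ^ a := by
      rw [Complex.norm_cpow_real]
    rw [hza]
    exact mul_le_mul_of_nonneg_right hT (by positivity)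
  -- conclude
  rw [← tendsto_sub_nhds_zero_iff]
  apply squeeze_zero_norm' hev
  have h1 : Tendsto (fun z : ℂ => ‖z‖) (nhdsWithin 0 slitᶜ) (nhds 0) := by
    have := (continuous_norm.tendsto 0).mono_left
      (nhdsWithin_le_nhds (s := slitᶜ))
    simpa using this
  have h2 : Tendsto (fun x : ℝ => C * x ^ a) (nhds 0) (nhds 0) := by
    have : Tendsto (fun x : ℝ => x ^ a) (nhds 0) (nhds ((0:ℝ) ^ a)) :=
      (Real.continuousAt_rpow_const 0 a (Or.inr ha0.le)).tendsto
    rw [Real.zero_rpow (by linarith)] at this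
    simpa using this.const_mul C
  exact h2.comp h1
end

section
/- For 0 < α < 1, the value ψ(iπ) has real part Re ψ(iπ) = 4π^{-2-α} cos(απ/2) Σ_{k=1}^∞ (2k-1)^{-2-α}, which is strictly positive. -/
open Complex Real

lemma cpow_pos_mul_I {t : ℝ} (ht : 0 < t) (r : ℝ) :
    ((t : ℂ) * Complex.I) ^ ((r : ℝ) : ℂ) =
      ((t ^ r : ℝ) : ℂ) * Complex.exp ((r : ℂ) * (π / 2) * Complex.I) := by
  have hz : (t : ℂ) * Complex.I ≠ 0 := by
    simp [Complex.ext_iff, ht.ne']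
  have hlog : Complex.log ((t : ℂ) * Complex.I) =
      (Real.log t : ℂ) + (π / 2 : ℝ) * Complex.I := by
    apply Complex.ext
    · simp [Complex.log_re, Complex.norm_real, Real.norm_eq_abs, abs_of_pos ht]
    · simp [Complex.log_im, Complex.arg_real_mul _ ht, Complex.arg_I]
  rw [Complex.cpow_def_of_ne_zero hz, hlog, add_mul, Complex.exp_add]
  congr 1
  · rw [← Complex.ofReal_mul, ← Complex.ofReal_exp, Real.rpow_def_of_pos ht]
  · congr 1; push_cast; ring

lemma cpow_negpos_mul_I {t : ℝ} (ht : 0 < t) (r : ℝ) :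
    (-(t : ℂ) * Complex.I) ^ ((r : ℝ) : ℂ) =
      ((t ^ r : ℝ) : ℂ) * Complex.exp (-(r : ℂ) * (π / 2) * Complex.I) := by
  have hz : -(t : ℂ) * Complex.I ≠ 0 := by
    simp [Complex.ext_iff, ht.ne']
  have hrw : -(t : ℂ) * Complex.I = (t : ℂ) * (-Complex.I) := by ring
  have hlog : Complex.log (-(t : ℂ) * Complex.I) =
      (Real.log t : ℂ) + (-(π / 2) : ℝ) * Complex.I := by
    apply Complex.ext
    · simp [Complex.log_re, Complex.norm_real, Real.norm_eq_abs, abs_of_pos ht]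
    · rw [Complex.log_im, hrw, Complex.arg_real_mul _ ht, Complex.arg_neg_I]
      simp
  rw [Complex.cpow_def_of_ne_zero hz, hlog, add_mul, Complex.exp_add]
  congr 1
  · rw [← Complex.ofReal_mul, ← Complex.ofReal_exp, Real.rpow_def_of_pos ht]
  · congr 1; push_cast; ring

/-- For `0 < α < 1`,
`Re ψ(iπ) = 4π^{-2-α} cos(απ/2) Σ_{k=1}^∞ (2k-1)^{-2-α} > 0`. -/
theorem stmt4 (α : ℝ) (hα0 : 0 < α) (hα1 : α < 1) :
    (psi α ((π : ℂ) * Complex.I)).re =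
        4 * π ^ (-(2 + α)) * Real.cos (α * π / 2) *
          ∑' k : ℕ, ((2 * (k : ℝ) + 1)) ^ (-(2 + α)) ∧
      0 < (psi α ((π : ℂ) * Complex.I)).re := by
  set r : ℝ := -(2 + α) with hr
  have hrneg : r < 0 := by rw [hr]; linarith
  have hrlt : r < -1 := by rw [hr]; linarith
  -- summability of (2n+1)^r
  have hsum : Summable (fun n : ℕ ↦ (2 * (n : ℝ) + 1) ^ r) := by
    have h0 : Summable (fun n : ℕ ↦ ((n : ℝ)) ^ r) := Real.summable_nat_rpow.mpr hrlt
    have h1 : Summable (fun n : ℕ ↦ (((n + 1 : ℕ) : ℝ)) ^ r) :=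
      (summable_nat_add_iff 1).mpr h0
    apply Summable.of_nonneg_of_le (fun n ↦ Real.rpow_nonneg (by positivity) _) _ h1
    intro n
    apply Real.rpow_le_rpow_of_nonpos (by positivity) (by push_cast; linarith) hrneg.le
  set G : ℕ → ℝ := fun n ↦ ((2 * (n : ℝ) + 1) * π) ^ r with hG
  have hGsum : Summable G := by
    have he : G = fun n : ℕ ↦ (2 * (n : ℝ) + 1) ^ r * π ^ r :=
      funext fun n ↦ Real.mul_rpow (by positivity) Real.pi_pos.le
    rw [he]
    exact hsum.mul_right _
  set c : ℂ := Complex.exp ((r : ℂ) * (π / 2) * Complex.I) with hc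
  set c' : ℂ := Complex.exp (-(r : ℂ) * (π / 2) * Complex.I) with hc'
  set f : ℤ → ℂ := fun k ↦ ((π : ℂ) * Complex.I + 2 * (k : ℂ) * (π : ℂ) * Complex.I)
      ^ ((r : ℝ) : ℂ) with hf
  have hpos : ∀ n : ℕ, f (n : ℤ) = ((G n : ℝ) : ℂ) * c := by
    intro n
    have ht : (0 : ℝ) < (2 * (n : ℝ) + 1) * π := by positivity
    have hz : (π : ℂ) * Complex.I + 2 * ((n : ℤ) : ℂ) * (π : ℂ) * Complex.I
        = (((2 * (n : ℝ) + 1) * π : ℝ) : ℂ) * Complex.I := by push_cast; ring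
    rw [hf]; simp only [hz]
    rw [cpow_pos_mul_I ht r]
  have hneg : ∀ n : ℕ, f (-((n : ℤ) + 1)) = ((G n : ℝ) : ℂ) * c' := by
    intro n
    have ht : (0 : ℝ) < (2 * (n : ℝ) + 1) * π := by positivity
    have hz : (π : ℂ) * Complex.I + 2 * (((-((n : ℤ) + 1)) : ℤ) : ℂ) * (π : ℂ) * Complex.I
        = -((((2 * (n : ℝ) + 1) * π : ℝ)) : ℂ) * Complex.I := by push_cast; ring
    rw [hf]; simp only [hz]
    rw [cpow_negpos_mul_I ht r]
  have hsc : Summable (fun n : ℕ ↦ f (n : ℤ)) := by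
    simp only [hpos]
    exact ((Complex.summable_ofReal.mpr hGsum).mul_right c)
  have hsc' : Summable (fun n : ℕ ↦ f (-((n : ℤ) + 1))) := by
    simp only [hneg]
    exact ((Complex.summable_ofReal.mpr hGsum).mul_right c')
  have htsum : ∑' k : ℤ, f k = ((∑' n : ℕ, G n : ℝ) : ℂ) * (c + c') := by
    rw [tsum_of_nat_of_neg_add_one hsc (by exact_mod_cast hsc')]
    have e1 : ∑' n : ℕ, f (n : ℤ) = ((∑' n : ℕ, G n : ℝ) : ℂ) * c := by
      simp only [hpos]
      rw [tsum_mul_right, Complex.ofReal_tsum]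
    have e2 : ∑' n : ℕ, f (-((n : ℤ) + 1)) = ((∑' n : ℕ, G n : ℝ) : ℂ) * c' := by
      simp only [hneg]
      rw [tsum_mul_right, Complex.ofReal_tsum]
    rw [e1]
    rw [show (fun n : ℕ ↦ f (-((n : ℕ) + 1))) = fun n : ℕ ↦ f (-((n : ℤ) + 1)) by
      push_cast; rfl]
    rw [e2]; ring
  have hcc : c + c' = ((2 * Real.cos (r * π / 2) : ℝ) : ℂ) := by
    rw [hc, hc',
      show ((r : ℂ) * (π / 2) * Complex.I) = ((r * π / 2 : ℝ) : ℂ) * Complex.I by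
        push_cast; ring,
      show (-(r : ℂ) * (π / 2) * Complex.I) = ((-(r * π / 2) : ℝ) : ℂ) * Complex.I by
        push_cast; ring,
      Complex.exp_mul_I, Complex.exp_mul_I, Complex.ofReal_neg, Complex.cos_neg,
      Complex.sin_neg, ← Complex.ofReal_cos, ← Complex.ofReal_sin]
    push_cast; ring
  have hcosr : Real.cos (r * π / 2) = -Real.cos (α * π / 2) := by
    have : r * π / 2 = -(α * π / 2 + π) := by rw [hr]; ring
    rw [this, Real.cos_neg, Real.cos_add_pi]
  have hpsi : psi α ((π : ℂ) * Complex.I)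
      = (((4 * Real.cos (α * π / 2) * ∑' n : ℕ, G n) : ℝ) : ℂ) := by
    rw [psi]
    rw [show (∑' k : ℤ, ((π : ℂ) * Complex.I + 2 * (k : ℂ) * (π : ℂ) * Complex.I)
        ^ (((-(2 + α) : ℝ)) : ℂ)) = ∑' k : ℤ, f k by rw [hf, hr]]
    rw [htsum, hcc, hcosr, Complex.exp_pi_mul_I]
    push_cast; ring
  have hSG : ∑' n : ℕ, G n = π ^ r * ∑' n : ℕ, (2 * (n : ℝ) + 1) ^ r := by
    have : ∀ n : ℕ, G n = (2 * (n : ℝ) + 1) ^ r * π ^ r := by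
      intro n
      exact Real.mul_rpow (by positivity) Real.pi_pos.le
    simp only [this]
    rw [tsum_mul_right]; ring
  have hre : (psi α ((π : ℂ) * Complex.I)).re =
      4 * π ^ (-(2 + α)) * Real.cos (α * π / 2) *
        ∑' k : ℕ, ((2 * (k : ℝ) + 1)) ^ (-(2 + α)) := by
    rw [hpsi, Complex.ofReal_re, hSG, ← hr]; ring
  refine ⟨hre, ?_⟩
  rw [hre]
  have hcospos : 0 < Real.cos (α * π / 2) := by
    apply Real.cos_pos_of_mem_Ioo
    constructor
    · nlinarith [Real.pi_pos]
    · nlinarith [Real.pi_pos]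
  have hS : 0 < ∑' k : ℕ, ((2 * (k : ℝ) + 1)) ^ (-(2 + α)) := by
    apply Summable.tsum_pos (by exact_mod_cast hsum) (fun n ↦ Real.rpow_nonneg (by positivity) _) 0
    apply Real.rpow_pos_of_pos; norm_num
  have hπ : 0 < (π : ℝ) ^ (-(2 + α)) := Real.rpow_pos_of_pos Real.pi_pos _
  positivity
end

section
/- For 0 < α < 1 and 0 < y < π, Im ψ(iy) < 0, where ψ(iy) = (1 - e^{iy})(A(y) + iB(y)) with A(y) = cos(απ/2) Σ_{k=0}^∞ ((2kπ+2π-y)^{-2-α} + (2kπ+y)^{-2-α}) and B(y) = sin(απ/2) Σ_{k=0}^∞ ((2kπ+2π-y)^{-2-α} - (2kπ+y)^{-2-α}). -/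
open Complex Real

/-- `A(y) = cos(απ/2) Σ_{k≥0} ((2kπ+2π-y)^{-2-α} + (2kπ+y)^{-2-α})`. -/
noncomputable def Aser (α y : ℝ) : ℝ :=
  Real.cos (α * π / 2) *
    ∑' k : ℕ, ((2 * k * π + 2 * π - y) ^ (-(2 + α)) + (2 * k * π + y) ^ (-(2 + α)))

/-- `B(y) = sin(απ/2) Σ_{k≥0} ((2kπ+2π-y)^{-2-α} - (2kπ+y)^{-2-α})`. -/
noncomputable def Bser (α y : ℝ) : ℝ :=
  Real.sin (α * π / 2) *
    ∑' k : ℕ, ((2 * k * π + 2 * π - y) ^ (-(2 + α)) - (2 * k * π + y) ^ (-(2 + α)))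

/-! On the imaginary axis every term of `ψ` is a power of a purely imaginary number, and
`(i t)^w = |t|^w e^{± iπw/2}` with the sign of `t`. The terms with `k ≥ 0` and `k < 0` are
therefore real multiples of two conjugate unit numbers, which gives `ψ(iy) = (1 - e^{iy})(A + iB)`.
For `0 < α < 1` the factor `cos(απ/2)` is positive, so `A > 0`; for `y < π` each term
`(2kπ + 2π - y)^{-2-α}` is smaller than `(2kπ + y)^{-2-α}`, so `B < 0`. With `sin y > 0` this
makes `B(1 - cos y) - A sin y` negative. -/

lemma cpow_I_mul_ofReal_of_pos {t : ℝ} (ht : 0 < t) (w : ℝ) :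
    (I * t) ^ (w : ℂ) = ↑(t ^ w) * (Real.cos (π / 2 * w) + Real.sin (π / 2 * w) * I) := by
  rw [cpow_ofReal, mul_comm I, arg_real_mul _ ht, arg_I]
  simp [abs_of_pos ht]

lemma cpow_I_mul_ofReal_of_neg {t : ℝ} (ht : t < 0) (w : ℝ) :
    (I * t) ^ (w : ℂ) = ↑((-t) ^ w) * (Real.cos (π / 2 * w) - Real.sin (π / 2 * w) * I) := by
  have : I * t = (-t : ℝ) * -I := by push_cast; ring
  rw [cpow_ofReal, this, arg_real_mul _ (neg_pos.mpr ht), arg_neg_I]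
  simp [abs_of_neg ht, neg_mul, sub_eq_add_neg]

lemma summable_rpow_neg_two_mul_pi_add {c s : ℝ} (hc : 0 < c) (hs : 1 < s) :
    Summable fun k : ℕ => (2 * k * π + c) ^ (-s) := by
  refine ((Real.summable_one_div_nat_add_rpow c s).mpr hs).of_nonneg_of_le
    (fun k => by positivity) fun k => ?_
  have hk : (k : ℝ) + c ≤ 2 * k * π + c := by nlinarith [Real.pi_gt_three, k.cast_nonneg (α := ℝ)]
  rw [abs_of_pos (by positivity), one_div, ← Real.rpow_neg (by positivity)]
  exact Real.rpow_le_rpow_of_nonpos (by positivity) hk (by linarith)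

section
variable {α y : ℝ}

lemma two_mul_pi_add_two_mul_pi_sub_pos (k : ℕ) (hy : y < 2 * π) :
    0 < 2 * k * π + 2 * π - y := by
  nlinarith [k.cast_nonneg (α := ℝ), Real.pi_pos]

lemma summable_rpow_two_mul_pi_add_two_mul_pi_sub (hα : -1 < α) (hy : y < 2 * π) :
    Summable fun k : ℕ => (2 * k * π + 2 * π - y) ^ (-(2 + α)) := by
  simpa only [add_sub_assoc] using
    summable_rpow_neg_two_mul_pi_add (sub_pos.mpr hy) (by linarith : 1 < 2 + α)

lemma summable_rpow_two_mul_pi_add (hα : -1 < α) (hy : 0 < y) :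
    Summable fun k : ℕ => (2 * k * π + y) ^ (-(2 + α)) :=
  summable_rpow_neg_two_mul_pi_add hy (by linarith)

lemma tsum_cpow_I_mul_add_two_mul_pi (hα : -1 < α) (hy0 : 0 < y) (hy2π : y < 2 * π) :
    ∑' k : ℤ, (I * y + 2 * (k : ℂ) * π * I) ^ ((-(2 + α) : ℝ) : ℂ) =
      -(Aser α y + I * Bser α y) := by
  have hcos : Real.cos (π / 2 * -(2 + α)) = -Real.cos (α * π / 2) := by
    rw [show π / 2 * -(2 + α) = -(α * π / 2 + π) by ring, Real.cos_neg, Real.cos_add_pi]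
  have hsin : Real.sin (π / 2 * -(2 + α)) = Real.sin (α * π / 2) := by
    rw [show π / 2 * -(2 + α) = -(α * π / 2 + π) by ring, Real.sin_neg, Real.sin_add_pi, neg_neg]
  have hP := summable_rpow_two_mul_pi_add_two_mul_pi_sub hα hy2π
  have hQ := summable_rpow_two_mul_pi_add hα hy0
  have hnat : HasSum (fun n : ℕ => (I * y + 2 * ((n : ℤ) : ℂ) * π * I) ^ ((-(2 + α) : ℝ) : ℂ))
      (↑(∑' k : ℕ, (2 * k * π + y) ^ (-(2 + α))) *
        (-Real.cos (α * π / 2) + Real.sin (α * π / 2) * I)) := by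
    refine ((Complex.hasSum_ofReal.mpr hQ.hasSum).mul_right _).congr_fun fun n => ?_
    rw [show I * y + 2 * ((n : ℤ) : ℂ) * π * I = I * ↑(2 * n * π + y) by push_cast; ring,
      cpow_I_mul_ofReal_of_pos (by positivity), hcos, hsin]
    push_cast
    ring
  have hneg : HasSum
      (fun n : ℕ => (I * y + 2 * ((-(n + 1) : ℤ) : ℂ) * π * I) ^ ((-(2 + α) : ℝ) : ℂ))
      (↑(∑' k : ℕ, (2 * k * π + 2 * π - y) ^ (-(2 + α))) *
        (-Real.cos (α * π / 2) - Real.sin (α * π / 2) * I)) := by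
    refine ((Complex.hasSum_ofReal.mpr hP.hasSum).mul_right _).congr_fun fun n => ?_
    have hn := two_mul_pi_add_two_mul_pi_sub_pos n hy2π
    rw [show I * y + 2 * ((-(n + 1) : ℤ) : ℂ) * π * I = I * ↑(-(2 * n * π + 2 * π - y)) by
        push_cast; ring, cpow_I_mul_ofReal_of_neg (by linarith), neg_neg, hcos, hsin]
    push_cast
    ring
  rw [(HasSum.of_nat_of_neg_add_one
    (f := fun k : ℤ => (I * y + 2 * (k : ℂ) * π * I) ^ ((-(2 + α) : ℝ) : ℂ)) hnat hneg).tsum_eq,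
    Aser, Bser, hP.tsum_add hQ, hP.tsum_sub hQ]
  simp only [Complex.ofReal_mul, Complex.ofReal_add, Complex.ofReal_sub]
  ring

lemma psi_I_mul (hα : -1 < α) (hy0 : 0 < y) (hy2π : y < 2 * π) :
    psi α (I * y) = (1 - exp (I * y)) * (Aser α y + I * Bser α y) := by
  rw [psi, tsum_cpow_I_mul_add_two_mul_pi hα hy0 hy2π]
  ring

lemma Aser_pos (hα : -1 < α) (hα1 : α < 1) (hy0 : 0 < y) (hy2π : y < 2 * π) :
    0 < Aser α y := by
  have hP := summable_rpow_two_mul_pi_add_two_mul_pi_sub hα hy2π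
  have hQ := summable_rpow_two_mul_pi_add hα hy0
  have hcos : 0 < Real.cos (α * π / 2) :=
    Real.cos_pos_of_mem_Ioo ⟨by nlinarith [Real.pi_pos], by nlinarith [Real.pi_pos]⟩
  refine mul_pos hcos ((hP.add hQ).tsum_pos (fun k => ?_) 0 ?_)
  · have := two_mul_pi_add_two_mul_pi_sub_pos k hy2π
    positivity
  · have := two_mul_pi_add_two_mul_pi_sub_pos 0 hy2π
    positivity

lemma Bser_neg (hα0 : 0 < α) (hα2 : α < 2) (hy0 : 0 < y) (hyπ : y < π) : Bser α y < 0 := by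
  have hα : -1 < α := by linarith
  have hy2π : y < 2 * π := by linarith
  have hP := summable_rpow_two_mul_pi_add_two_mul_pi_sub hα hy2π
  have hQ := summable_rpow_two_mul_pi_add hα hy0
  have hsin : 0 < Real.sin (α * π / 2) :=
    Real.sin_pos_of_pos_of_lt_pi (by positivity) (by nlinarith [Real.pi_pos])
  have hlt (k : ℕ) :
      (2 * k * π + 2 * π - y) ^ (-(2 + α)) < (2 * k * π + y) ^ (-(2 + α)) :=
    Real.rpow_lt_rpow_of_neg (by positivity) (by linarith) (by linarith)
  refine mul_neg_of_pos_of_neg hsin ?_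
  rw [← tsum_zero]
  exact (hP.sub hQ).tsum_lt_tsum (fun k => (sub_neg.mpr (hlt k)).le) (sub_neg.mpr (hlt 0))
    summable_zero

lemma im_one_sub_exp_I_mul_mul (y a b : ℝ) :
    ((1 - exp (I * y)) * (a + I * b)).im = b * (1 - Real.cos y) - a * Real.sin y := by
  rw [mul_comm I, exp_mul_I, ← ofReal_cos, ← ofReal_sin]
  simp only [mul_im, sub_re, sub_im, add_re, add_im, one_re, one_im, ofReal_re, ofReal_im,
    mul_re, I_re, I_im]
  ring

end

/-- For `0 < α < 1` and `0 < y < π`, `ψ(iy) = (1 - e^{iy})(A(y) + iB(y))` and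
`Im ψ(iy) = B(y)(1-cos y) - A(y) sin y < 0`. -/
theorem stmt5 (α : ℝ) (hα0 : 0 < α) (hα1 : α < 1) (y : ℝ) (hy0 : 0 < y) (hyπ : y < π) :
    psi α (Complex.I * y) =
        (1 - Complex.exp (Complex.I * y)) * ((Aser α y : ℂ) + Complex.I * (Bser α y : ℂ)) ∧
      (psi α (Complex.I * y)).im = Bser α y * (1 - Real.cos y) - Aser α y * Real.sin y ∧
      (psi α (Complex.I * y)).im < 0 := by
  have hα : -1 < α := by linarith
  have hy2π : y < 2 * π := by linarith
  have hpsi := psi_I_mul hα hy0 hy2π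
  have him : (psi α (I * y)).im = Bser α y * (1 - Real.cos y) - Aser α y * Real.sin y := by
    rw [hpsi, im_one_sub_exp_I_mul_mul]
  refine ⟨hpsi, him, ?_⟩
  have hA := Aser_pos hα hα1 hy0 hy2π
  have hB := Bser_neg hα0 (by linarith) hy0 hyπ
  have hsin := Real.sin_pos_of_pos_of_lt_pi hy0 hyπ
  nlinarith [Real.cos_le_one y]
end

section
/- For 0 < α < 1 there is a constant C_α > 0 such that for every μ > 0 and every 0 < y ≤ π, the function g(y) = (1 + μ ψ(iy))^{-1} satisfies |g'(y)| < C_α μ y^{-2-α} / (1 + μ y^{-1-α})². -/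
open Complex Real

namespace Stmt7Aux

lemma re_cpow_real (z : ℂ) (hz : z ≠ 0) (r : ℝ) :
    (z ^ (r : ℂ)).re = ‖z‖ ^ r * Real.cos (r * z.arg) := by
  rw [Complex.cpow_def_of_ne_zero hz, Complex.exp_re]
  have h1 : (Complex.log z * (r:ℂ)).re = Real.log (‖z‖) * r := by
    simp [Complex.log_re]
  have h2 : (Complex.log z * (r:ℂ)).im = z.arg * r := by
    simp [Complex.log_im]
  rw [h1, h2, Real.rpow_def_of_pos (norm_pos_iff.mpr hz), mul_comm z.arg r]

lemma arg_I_mul_pos (s : ℝ) (hs : 0 < s) : (Complex.I * (s:ℂ)).arg = π/2 := by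
  rw [mul_comm, Complex.arg_real_mul Complex.I hs, Complex.arg_I]

lemma arg_I_mul_neg (s : ℝ) (hs : s < 0) : (Complex.I * (s:ℂ)).arg = -(π/2) := by
  have h : Complex.I * (s:ℂ) = ((-s : ℝ):ℂ) * (-Complex.I) := by push_cast; ring
  rw [h, Complex.arg_real_mul _ (by linarith), Complex.arg_neg_I]


lemma re_term (s r α : ℝ) (hs : s ≠ 0) (hr : r = -(2+α)) :
    ((Complex.I * (s:ℂ)) ^ (r : ℂ)).re = -(|s| ^ r * Real.cos (α * π / 2)) := by
  have hz : Complex.I * (s:ℂ) ≠ 0 := by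
    simp [Complex.ext_iff, hs]
  rw [re_cpow_real _ hz r]
  have habs : ‖Complex.I * (s:ℂ)‖ = |s| := by
    simp [Complex.norm_real]
  rw [habs]
  rcases lt_or_gt_of_ne hs with h | h
  · rw [arg_I_mul_neg s h]
    have h2 : r * -(π/2) = α * π / 2 + π := by rw [hr]; ring
    rw [h2, Real.cos_add_pi]; ring
  · rw [arg_I_mul_pos s h]
    have h2 : r * (π/2) = -(α * π / 2 + π) := by rw [hr]; ring
    rw [h2, Real.cos_neg, Real.cos_add_pi]; ring


noncomputable def T : ℝ := ∑' k : ℤ, 1/((k:ℝ))^2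

lemma sumT : Summable (fun k : ℤ => 1/((k:ℝ))^2) :=
  summable_one_div_int_pow.mpr one_lt_two

lemma T_nonneg : 0 ≤ T := tsum_nonneg (fun k => by positivity)

lemma base_eq (t : ℝ) (k : ℤ) :
    Complex.I * (t:ℂ) + 2 * (k : ℂ) * (π : ℂ) * Complex.I = Complex.I * (((t + 2*k*π) : ℝ):ℂ) := by
  push_cast; ring

lemma abs_I_mul (s : ℝ) : ‖Complex.I * (s:ℂ)‖ = |s| := by
  simp

lemma abs_term (s e : ℝ) :
    ‖(Complex.I * (s:ℂ)) ^ ((e:ℝ):ℂ)‖ = |s| ^ e := by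
  rw [Complex.norm_cpow_real, abs_I_mul]

-- lower bounds on |t + 2kπ|
lemma base_lb_ne (k : ℤ) (hk : k ≠ 0) (t : ℝ) (ht0 : 0 < t) (ht : t ≤ 3*π/2) :
    1 ≤ |t + 2*k*π| ∧ |(k:ℝ)| ≤ |t + 2*k*π| := by
  have hπ := Real.pi_gt_three
  rcases lt_or_gt_of_ne hk with h | h
  · -- k ≤ -1
    have hk1 : (k:ℝ) ≤ -1 := by
      have hh : k ≤ -1 := by omega
      exact_mod_cast hh
    have habs : |(k:ℝ)| = -(k:ℝ) := abs_of_neg (by linarith)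
    have hneg : t + 2*k*π ≤ -(π/2) := by nlinarith
    have : |t + 2*k*π| = -(t + 2*k*π) := abs_of_neg (by nlinarith)
    constructor
    · rw [this]; nlinarith
    · rw [this, habs]; nlinarith
  · have hk1 : (1:ℝ) ≤ (k:ℝ) := by exact_mod_cast h
    have : |t + 2*k*π| = t + 2*k*π := abs_of_pos (by nlinarith)
    rw [this, abs_of_pos (by linarith)]
    constructor <;> nlinarith

lemma rpow_tail_bound (b : ℝ) (k : ℤ) (hk : k ≠ 0) (h1 : (1:ℝ) ≤ b) (h2 : |(k:ℝ)| ≤ b) (e : ℝ)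
    (he : e ≤ -2) : b ^ e ≤ 1/((k:ℝ))^2 := by
  have h0 : (0:ℝ) < b := by linarith
  have step1 : b ^ e ≤ b ^ (-2:ℝ) := Real.rpow_le_rpow_of_exponent_le h1 (by linarith)
  have step2 : b ^ (-2:ℝ) = (b^(2:ℕ))⁻¹ := by
    rw [← Real.rpow_natCast b 2, ← Real.rpow_neg h0.le]; norm_num
  have hks : (k:ℝ)^2 ≤ b^2 := by
    have h := _root_.sq_abs (k:ℝ)
    nlinarith [sq_nonneg (|(k:ℝ)| - b), abs_nonneg (k:ℝ)]
  calc b ^ e ≤ (b^(2:ℕ))⁻¹ := by rw [← step2]; exact step1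
    _ ≤ 1/((k:ℝ))^2 := by
        have hk0 : (k:ℝ) ≠ 0 := Int.cast_ne_zero.mpr hk
        have hk2 : (0:ℝ) < (k:ℝ)^2 := by positivity
        rw [one_div]
        exact inv_anti₀ hk2 (by push_cast at hks ⊢; nlinarith)


lemma sum_ite_val (a : ℝ) (f : ℤ → ℝ) (hf : Summable f) (hf0 : f 0 = 0) :
    Summable (fun k : ℤ => if k = 0 then a else f k) ∧
    ∑' k : ℤ, (if k = 0 then a else f k) = a + ∑' k : ℤ, f k := by
  have heq : (fun k : ℤ => if k = 0 then a else f k)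
      = (fun k : ℤ => (if k = 0 then a else 0) + f k) := by
    funext k
    rcases eq_or_ne k 0 with rfl | hk
    · simp [hf0]
    · simp [hk]
  have h1 : Summable (fun k : ℤ => if k = 0 then a else (0:ℝ)) :=
    (hasSum_ite_eq (0:ℤ) a).summable
  constructor
  · rw [heq]; exact h1.add hf
  · rw [heq, h1.tsum_add hf, tsum_ite_eq]


set_option maxHeartbeats 1000000 in
lemma main_deriv (α : ℝ) (hα0 : 0 < α) (hα1 : α < 1) (y : ℝ) (hy0 : 0 < y) (hyπ : y ≤ π) :
    ∃ D : ℂ, HasDerivAt (fun z : ℂ => psi α (Complex.I * z)) D ((y:ℝ):ℂ) ∧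
      ‖D‖ ≤ (4 + T*π^(3:ℝ) + 3*T*π^(4:ℝ)) * y ^ (-(2+α)) := by
  have hπ := Real.pi_gt_three
  set r : ℝ := -(2+α) with hr
  set c : ℂ := ((-(2 + α) : ℝ) : ℂ) with hc
  set A : ℤ → ℂ := fun k => 2 * (k : ℂ) * (π : ℂ) * Complex.I with hA
  set g : ℤ → ℂ → ℂ := fun k z => (z + A k) ^ c with hg
  set g' : ℤ → ℂ → ℂ := fun k z => c * (z + A k) ^ (c - 1) * 1 with hg'
  set t : Set ℂ := Metric.ball (Complex.I * (y:ℂ)) (y/2) with ht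
  -- im of z + A k
  have himA : ∀ (z : ℂ) (k : ℤ), (z + A k).im = z.im + 2*k*π := by
    intro z k
    simp [hA]
    try ring
  have hmem : ∀ z ∈ t, y/2 < z.im ∧ z.im < 3*y/2 := by
    intro z hz
    rw [ht, Metric.mem_ball, Complex.dist_eq] at hz
    have h2 : |(z - Complex.I * (y:ℂ)).im| ≤ ‖z - Complex.I * (y:ℂ)‖ :=
      Complex.abs_im_le_norm _
    have h3 : (z - Complex.I * (y:ℂ)).im = z.im - y := by simp
    rw [h3] at h2
    cases' abs_lt.mp (lt_of_le_of_lt h2 hz) with hl hr'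
    constructor <;> linarith
  -- lower bounds on |im (z + A k)| for z in ball
  have him_lb : ∀ z ∈ t, ∀ k : ℤ, k ≠ 0 →
      1 ≤ |(z + A k).im| ∧ |(k:ℝ)| ≤ |(z + A k).im| := by
    intro z hz k hk
    obtain ⟨h1, h2⟩ := hmem z hz
    rw [himA]
    exact base_lb_ne k hk z.im (by linarith) (by nlinarith)
  have him0 : ∀ z ∈ t, ∀ k : ℤ, (z + A k).im ≠ 0 := by
    intro z hz k
    rcases eq_or_ne k 0 with rfl | hk
    · obtain ⟨h1, h2⟩ := hmem z hz
      rw [himA]; push_cast; simp only [mul_zero, zero_mul, add_zero]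
      intro h; rw [h] at h1; linarith
    · intro h
      have := (him_lb z hz k hk).1
      rw [h] at this; simp at this; linarith
  have habs_im : ∀ w : ℂ, |w.im| ≤ ‖w‖ := fun w => Complex.abs_im_le_norm w
  -- derivative of each term
  have hgd : ∀ (k : ℤ), ∀ z ∈ t, HasDerivAt (g k) (g' k z) z := by
    intro k z hz
    exact ((hasDerivAt_id z).add_const (A k)).cpow_const
      (Complex.mem_slitPlane_iff.2 (Or.inr (him0 z hz k)))
  -- exponent facts
  have hc1 : c - 1 = ((r - 1 : ℝ) : ℂ) := by rw [hc, hr]; push_cast; ring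
  have hr2 : r - 1 ≤ -2 := by rw [hr]; linarith
  have hnc : ‖c‖ = 2 + α := by
    rw [hc, Complex.norm_real, Real.norm_eq_abs, abs_of_neg (by linarith)]; ring
  -- norm of g' bound
  set u : ℤ → ℝ := fun k => if k = 0 then 3*((y/2) ^ (r-1)) else 3*(1/((k:ℝ))^2) with hu
  have hg'b : ∀ (k : ℤ), ∀ z ∈ t, ‖g' k z‖ ≤ u k := by
    intro k z hz
    have habs : ‖g' k z‖ = (2+α) * ‖z + A k‖ ^ (r-1) := by
      rw [hg']
      simp only [mul_one, norm_mul, hnc, hc1]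
      rw [Complex.norm_cpow_real]
    rw [habs, hu]
    beta_reduce
    rcases eq_or_ne k 0 with rfl | hk
    · rw [if_pos rfl]
      have hb : y/2 ≤ ‖z + A 0‖ := by
        refine le_trans ?_ (le_trans (le_abs_self _) (habs_im _))
        rw [himA]; push_cast; obtain ⟨h1, _⟩ := hmem z hz; simp; linarith
      have h5 := Real.rpow_le_rpow_of_nonpos (by linarith) hb (by linarith : r - 1 ≤ 0)
      nlinarith [Real.rpow_nonneg (norm_nonneg (z + A 0)) (r-1),
        Real.rpow_nonneg (le_of_lt (by linarith : (0:ℝ) < y/2)) (r-1)]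
    · rw [if_neg hk]
      obtain ⟨h1, h2⟩ := him_lb z hz k hk
      have hb1 : 1 ≤ ‖z + A k‖ := le_trans h1 (habs_im _)
      have hb2 : |(k:ℝ)| ≤ ‖z + A k‖ := le_trans h2 (habs_im _)
      have h5 := rpow_tail_bound (‖z + A k‖) k hk hb1 hb2 (r-1) hr2
      have h6 : (0:ℝ) ≤ ‖z + A k‖ ^ (r-1) :=
        Real.rpow_nonneg (norm_nonneg _) _
      nlinarith
  have hT3 : Summable (fun k : ℤ => 3*(1/((k:ℝ))^2)) := sumT.mul_left 3
  have hu_sum : Summable u := by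
    rw [hu]
    exact (sum_ite_val _ _ hT3 (by norm_num)).1
  -- summability at center
  have hcen : Complex.I * (y:ℂ) ∈ t := by
    rw [ht]; exact Metric.mem_ball_self (by linarith)
  have habs_g : ∀ (k : ℤ) (s : ℝ), ‖g k (Complex.I * (s:ℂ))‖
      = |s + 2*k*π| ^ r := by
    intro k s
    rw [hg]
    simp only
    rw [base_eq, hc, abs_term]
  have habs_g' : ∀ (k : ℤ) (s : ℝ), ‖g' k (Complex.I * (s:ℂ))‖
      = (2+α) * |s + 2*k*π| ^ (r-1) := by
    intro k s
    rw [hg']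
    simp only [mul_one, norm_mul, hnc, hc1]
    rw [base_eq, Complex.norm_cpow_real, abs_I_mul]
  have hbase_y : ∀ k : ℤ, k ≠ 0 → 1 ≤ |y + 2*k*π| ∧ |(k:ℝ)| ≤ |y + 2*k*π| := by
    intro k hk; exact base_lb_ne k hk y hy0 (by nlinarith)
  have hg0 : Summable (fun k : ℤ => g k (Complex.I * (y:ℂ))) := by
    apply Summable.of_norm_bounded (g := fun k : ℤ => if k = 0 then y ^ r else 1/((k:ℝ))^2)
    · exact (sum_ite_val _ _ sumT (by norm_num)).1
    · intro k
      rw [habs_g]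
      rcases eq_or_ne k 0 with rfl | hk
      · simp [abs_of_pos hy0]
      · simp only [if_neg hk]
        obtain ⟨h1, h2⟩ := hbase_y k hk
        exact rpow_tail_bound _ k hk h1 h2 r (by rw [hr]; linarith)
  -- the series has derivative
  have hS : HasDerivAt (fun z => ∑' k : ℤ, g k z) (∑' k : ℤ, g' k (Complex.I * (y:ℂ)))
      (Complex.I * (y:ℂ)) := by
    exact hasDerivAt_tsum_of_isPreconnected hu_sum Metric.isOpen_ball
      (convex_ball _ _).isPreconnected hgd hg'b hcen hg0 hcen
  set S : ℂ := ∑' k : ℤ, g k (Complex.I * (y:ℂ)) with hSdef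
  set DS : ℂ := ∑' k : ℤ, g' k (Complex.I * (y:ℂ)) with hDSdef
  -- bounds on S and DS
  have hyabs : |y| = y := abs_of_pos hy0
  have hSb : ‖S‖ ≤ y ^ r + T := by
    have hsum_norm : Summable (fun k : ℤ => ‖g k (Complex.I * (y:ℂ))‖) := by
      apply Summable.of_nonneg_of_le (fun k => norm_nonneg _)
        (f := fun k : ℤ => if k = 0 then y ^ r else 1/((k:ℝ))^2) ?_
        (sum_ite_val _ _ sumT (by norm_num)).1
      intro k
      beta_reduce
      rw [habs_g]
      rcases eq_or_ne k 0 with rfl | hk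
      · simp [hyabs]
      · rw [if_neg hk]
        obtain ⟨h1, h2⟩ := hbase_y k hk
        exact rpow_tail_bound _ k hk h1 h2 r (by rw [hr]; linarith)
    refine le_trans (norm_tsum_le_tsum_norm hsum_norm) ?_
    have hle := Summable.tsum_le_tsum (f := fun k : ℤ => ‖g k (Complex.I * (y:ℂ))‖)
      (g := fun k : ℤ => if k = 0 then y ^ r else 1/((k:ℝ))^2) ?_ hsum_norm
      (sum_ite_val _ _ sumT (by norm_num)).1
    · exact le_trans hle (le_of_eq (sum_ite_val _ _ sumT (by norm_num)).2)
    · intro k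
      beta_reduce
      rw [habs_g]
      rcases eq_or_ne k 0 with rfl | hk
      · simp [hyabs]
      · rw [if_neg hk]
        obtain ⟨h1, h2⟩ := hbase_y k hk
        exact rpow_tail_bound _ k hk h1 h2 r (by rw [hr]; linarith)
  have hsum_norm' : Summable (fun k : ℤ => ‖g' k (Complex.I * (y:ℂ))‖) := by
    apply Summable.of_nonneg_of_le (fun k => norm_nonneg _) (fun k => hg'b k _ hcen) hu_sum
  have hg'y_bound : ∀ k : ℤ, ‖g' k (Complex.I * (y:ℂ))‖ ≤
      (if k = 0 then 3*(y ^ (r-1)) else 3*(1/((k:ℝ))^2)) := by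
    intro k
    rw [habs_g']
    rcases eq_or_ne k 0 with rfl | hk
    · simp only [if_pos rfl]
      push_cast
      simp only [mul_zero, zero_mul, add_zero]
      rw [hyabs]
      have : (0:ℝ) ≤ y ^ (r-1) := Real.rpow_nonneg hy0.le _
      nlinarith
    · rw [if_neg hk]
      obtain ⟨h1, h2⟩ := hbase_y k hk
      have h5 := rpow_tail_bound _ k hk h1 h2 (r-1) hr2
      have h6 : (0:ℝ) ≤ |y + 2*k*π| ^ (r-1) := Real.rpow_nonneg (abs_nonneg _) _
      nlinarith
  have hDSb : ‖DS‖ ≤ 3*(y ^ (r-1)) + 3*T := by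
    refine le_trans (norm_tsum_le_tsum_norm hsum_norm') ?_
    have hle := Summable.tsum_le_tsum hg'y_bound hsum_norm' (sum_ite_val _ _ hT3 (by norm_num)).1
    refine le_trans hle ?_
    rw [(sum_ite_val _ _ hT3 (by norm_num)).2]
    rw [tsum_mul_left]
    exact le_of_eq rfl
  -- product rule and composition
  have hexp : HasDerivAt (fun z : ℂ => Complex.exp z - 1) (Complex.exp (Complex.I * (y:ℂ)))
      (Complex.I * (y:ℂ)) := (Complex.hasDerivAt_exp _).sub_const 1
  set Dz : ℂ := Complex.exp (Complex.I * (y:ℂ)) * S + (Complex.exp (Complex.I * (y:ℂ)) - 1) * DS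
    with hDz
  have hψC : HasDerivAt (fun z : ℂ => psi α z) Dz (Complex.I * (y:ℂ)) := by
    have hfun : (fun z : ℂ => psi α z) = fun z : ℂ => (Complex.exp z - 1) * ∑' k : ℤ, g k z := by
      funext z; rw [psi]
    rw [hfun, hDz, hSdef, hDSdef]
    exact hexp.mul hS
  have hinner : HasDerivAt (fun z : ℂ => Complex.I * z) Complex.I (y:ℂ) := by
    simpa using (hasDerivAt_id ((y:ℝ):ℂ)).const_mul Complex.I
  have hcomp : HasDerivAt (fun z : ℂ => psi α (Complex.I * z)) (Dz * Complex.I) ((y:ℝ):ℂ) := by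
    have h := HasDerivAt.comp ((y:ℝ):ℂ) hψC hinner
    exact h
  refine ⟨Dz * Complex.I, hcomp, ?_⟩
  -- norm bound
  have hnormDzI : ‖Dz * Complex.I‖ = ‖Dz‖ := by
    rw [norm_mul, Complex.norm_I, mul_one]
  have habs_expIy : ‖Complex.exp (Complex.I * (y:ℂ))‖ = 1 := by
    rw [Complex.norm_exp]; simp
  have habs_exp1 : ‖Complex.exp (Complex.I * (y:ℂ)) - 1‖ ≤ y := by
    have hmulc : Complex.I * (y:ℂ) = ((y:ℝ):ℂ) * Complex.I := by ring
    have hsq : (‖Complex.exp (Complex.I * (y:ℂ)) - 1‖)^2 = 2 - 2*Real.cos y := by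
      rw [Complex.sq_norm, Complex.normSq_apply, hmulc]
      simp only [Complex.sub_re, Complex.sub_im, Complex.exp_ofReal_mul_I_re,
        Complex.exp_ofReal_mul_I_im, Complex.one_re, Complex.one_im]
      have := Real.sin_sq_add_cos_sq y
      nlinarith
    have hcos := Real.one_sub_sq_div_two_le_cos (x := y)
    have hnn := norm_nonneg (Complex.exp (Complex.I * (y:ℂ)) - 1)
    nlinarith [sq_nonneg (‖Complex.exp (Complex.I * (y:ℂ)) - 1‖ - y)]
  have hDzb : ‖Dz‖ ≤ (y ^ r + T) + y * (3*(y ^ (r-1)) + 3*T) := by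
    rw [hDz]
    refine le_trans (norm_add_le _ _) ?_
    rw [norm_mul, norm_mul, habs_expIy, one_mul]
    have h2 : ‖Complex.exp (Complex.I * (y:ℂ)) - 1‖ * ‖DS‖
        ≤ y * (3*(y ^ (r-1)) + 3*T) := by
      apply mul_le_mul habs_exp1 hDSb (norm_nonneg _) hy0.le
    linarith [hSb]
  -- rpow arithmetic
  have hyr1 : y * (y ^ (r-1)) = y ^ r := by
    have h := Real.rpow_add hy0 1 (r-1)
    rw [Real.rpow_one] at h
    rw [← h]; ring_nf
  have hπr : π ^ r ≤ y ^ r :=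
    Real.rpow_le_rpow_of_nonpos hy0 hyπ (by rw [hr]; linarith)
  have h1π3 : 1 ≤ π ^ (3:ℝ) * y ^ r := by
    have hb : π ^ (3:ℝ) * π ^ r = π ^ (3 + r) := (Real.rpow_add Real.pi_pos 3 r).symm
    have hd : (1:ℝ) ≤ π ^ (3 + r) :=
      Real.one_le_rpow (by linarith) (by rw [hr]; linarith)
    calc (1:ℝ) ≤ π ^ (3 + r) := hd
      _ = π ^ (3:ℝ) * π ^ r := hb.symm
      _ ≤ π ^ (3:ℝ) * y ^ r :=
          mul_le_mul_of_nonneg_left hπr (Real.rpow_nonneg Real.pi_pos.le _)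
  have hππ4 : π * (π ^ (3:ℝ)) = π ^ (4:ℝ) := by
    nth_rewrite 1 [← Real.rpow_one π]
    rw [← Real.rpow_add Real.pi_pos]; norm_num
  have hπ4 : π ≤ π ^ (4:ℝ) * y ^ r := by
    calc π = π * 1 := by ring
      _ ≤ π * (π ^ (3:ℝ) * y ^ r) := by
          apply mul_le_mul_of_nonneg_left h1π3 Real.pi_pos.le
      _ = π ^ (4:ℝ) * y ^ r := by rw [← hππ4]; ring
  -- final
  rw [hnormDzI]
  have hyT : y * (3*T) ≤ π * (3*T) :=
    mul_le_mul_of_nonneg_right hyπ (by nlinarith [T_nonneg])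
  have hyrpos : (0:ℝ) ≤ y ^ r := Real.rpow_nonneg hy0.le _
  have hTle : T ≤ T * (π ^ (3:ℝ) * y ^ r) :=
    le_mul_of_one_le_right T_nonneg h1π3
  have hT4 : π * (3*T) ≤ 3*T*(π ^ (4:ℝ) * y ^ r) := by
    calc π * (3*T) = (3*T)*π := by ring
      _ ≤ (3*T)*(π ^ (4:ℝ) * y ^ r) :=
          mul_le_mul_of_nonneg_left hπ4 (by linarith [T_nonneg])
      _ = 3*T*(π ^ (4:ℝ) * y ^ r) := by ring
  calc ‖Dz‖ ≤ (y ^ r + T) + y * (3*(y ^ (r-1)) + 3*T) := hDzb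
    _ = (y ^ r + T) + 3*(y * y ^ (r-1)) + y * (3*T) := by ring
    _ = (y ^ r + T) + 3*(y ^ r) + y * (3*T) := by rw [hyr1]
    _ ≤ (y ^ r + T * (π ^ (3:ℝ) * y ^ r)) + 3*(y ^ r) + 3*T*(π ^ (4:ℝ) * y ^ r) := by
        have := le_trans hyT hT4
        linarith [hTle]
    _ = (4 + T*π^(3:ℝ) + 3*T*π^(4:ℝ)) * y ^ r := by ring

set_option maxHeartbeats 1000000 in
lemma S_bounds (α y : ℝ) (hα0 : 0 < α) (hα1 : α < 1) (hy0 : 0 < y) (hyπ : y ≤ π) :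
    Summable (fun k : ℤ =>
      (Complex.I * (y:ℂ) + 2 * (k : ℂ) * (π : ℂ) * Complex.I) ^ (((-(2 + α) : ℝ)) : ℂ)) ∧
    ‖∑' k : ℤ,
      (Complex.I * (y:ℂ) + 2 * (k : ℂ) * (π : ℂ) * Complex.I) ^ (((-(2 + α) : ℝ)) : ℂ)‖
      ≤ y ^ (-(2+α)) + T ∧
    (∑' k : ℤ,
      (Complex.I * (y:ℂ) + 2 * (k : ℂ) * (π : ℂ) * Complex.I) ^ (((-(2 + α) : ℝ)) : ℂ)).re
      ≤ -(Real.cos (α*π/2) * y ^ (-(2+α))) := by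
  have hπ := Real.pi_gt_three
  set r : ℝ := -(2+α) with hr
  set w : ℤ → ℂ := fun k =>
    (Complex.I * (y:ℂ) + 2 * (k : ℂ) * (π : ℂ) * Complex.I) ^ (((-(2 + α) : ℝ)) : ℂ) with hw
  have hyabs : |y| = y := abs_of_pos hy0
  have hbase_y : ∀ k : ℤ, k ≠ 0 → 1 ≤ |y + 2*k*π| ∧ |(k:ℝ)| ≤ |y + 2*k*π| := by
    intro k hk; exact base_lb_ne k hk y hy0 (by nlinarith)
  have habs_w : ∀ k : ℤ, ‖w k‖ = |y + 2*k*π| ^ r := by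
    intro k
    rw [hw]
    beta_reduce
    rw [base_eq, abs_term]
  have hnorm_bd : ∀ k : ℤ, ‖w k‖ ≤ (if k = 0 then y ^ r else 1/((k:ℝ))^2) := by
    intro k
    rw [habs_w]
    rcases eq_or_ne k 0 with rfl | hk
    · simp [hyabs]
    · rw [if_neg hk]
      obtain ⟨h1, h2⟩ := hbase_y k hk
      exact rpow_tail_bound _ k hk h1 h2 r (by rw [hr]; linarith)
  have hite_sum := sum_ite_val (y ^ r) _ sumT (by norm_num)
  have hsum_norm : Summable (fun k : ℤ => ‖w k‖) :=
    Summable.of_nonneg_of_le (fun k => norm_nonneg _) hnorm_bd hite_sum.1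
  have hwsum : Summable w := Summable.of_norm hsum_norm
  have hcosα : 0 < Real.cos (α*π/2) := by
    apply Real.cos_pos_of_mem_Ioo
    constructor <;> nlinarith [Real.pi_pos]
  refine ⟨hwsum, ?_, ?_⟩
  · refine le_trans (norm_tsum_le_tsum_norm hsum_norm) ?_
    exact le_trans (Summable.tsum_le_tsum hnorm_bd hsum_norm hite_sum.1) (le_of_eq hite_sum.2)
  · have hre_k : ∀ k : ℤ, (w k).re = -(|y + 2*k*π| ^ r * Real.cos (α*π/2)) := by
      intro k
      have hs : y + 2*k*π ≠ 0 := by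
        rcases eq_or_ne k 0 with rfl | hk
        · push_cast; intro h; nlinarith
        · intro h
          have := (hbase_y k hk).1
          rw [h] at this; simp at this; linarith
      rw [hw]
      beta_reduce
      rw [base_eq]
      exact re_term (y + 2*k*π) r α hs hr
    have hsum_re : Summable (fun k : ℤ => (w k).re) :=
      Summable.of_norm_bounded hsum_norm (fun k => by
        rw [Real.norm_eq_abs]; exact Complex.abs_re_le_norm _)
    rw [Complex.re_tsum hwsum]
    have hneg : ∀ j : ℤ, j ≠ 0 → 0 ≤ -((w j).re) := by
      intro j _
      rw [hre_k]
      have : (0:ℝ) ≤ |y + 2*j*π| ^ r := Real.rpow_nonneg (abs_nonneg _) _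
      nlinarith
    have h0 : -((w 0).re) ≤ ∑' k : ℤ, -((w k).re) := Summable.le_tsum hsum_re.neg 0 hneg
    rw [tsum_neg] at h0
    have hre0 : (w 0).re = -(y ^ r * Real.cos (α*π/2)) := by
      rw [hre_k]
      norm_num [hyabs]
    rw [hre0] at h0
    linarith

lemma abs_exp_I_sub_one (y : ℝ) (hy0 : 0 ≤ y) :
    ‖Complex.exp (Complex.I * (y:ℂ)) - 1‖ ≤ y := by
  have hmulc : Complex.I * (y:ℂ) = ((y:ℝ):ℂ) * Complex.I := by ring
  have hsq : (‖Complex.exp (Complex.I * (y:ℂ)) - 1‖)^2 = 2 - 2*Real.cos y := by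
    rw [Complex.sq_norm, Complex.normSq_apply, hmulc]
    simp only [Complex.sub_re, Complex.sub_im, Complex.exp_ofReal_mul_I_re,
      Complex.exp_ofReal_mul_I_im, Complex.one_re, Complex.one_im]
    have := Real.sin_sq_add_cos_sq y
    nlinarith
  have hcos := Real.one_sub_sq_div_two_le_cos (x := y)
  have hnn := norm_nonneg (Complex.exp (Complex.I * (y:ℂ)) - 1)
  nlinarith [sq_nonneg (‖Complex.exp (Complex.I * (y:ℂ)) - 1‖ - y)]

lemma rot_identity (y : ℝ) :
    Complex.exp ((((π - y)/2 : ℝ) : ℂ) * Complex.I) * (Complex.exp (Complex.I * (y:ℂ)) - 1)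
      = ((-(2*Real.sin (y/2)) : ℝ) : ℂ) := by
  have h1 : Complex.I * (y:ℂ) = ((y:ℝ):ℂ) * Complex.I := by ring
  rw [h1, mul_sub, mul_one, ← Complex.exp_add]
  have h2 : (((π - y)/2 : ℝ) : ℂ) * Complex.I + ((y:ℝ):ℂ) * Complex.I
      = ((y/2 + π/2 : ℝ):ℂ) * Complex.I := by push_cast; ring
  have h3 : (((π - y)/2 : ℝ) : ℂ) = ((π/2 - y/2 : ℝ):ℂ) := by push_cast; ring
  rw [h2, h3]
  apply Complex.ext
  · simp only [Complex.sub_re, Complex.exp_ofReal_mul_I_re, Complex.ofReal_re,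
      Real.cos_add_pi_div_two, Real.cos_pi_div_two_sub]
    ring
  · simp only [Complex.sub_im, Complex.exp_ofReal_mul_I_im, Complex.ofReal_im,
      Real.sin_add_pi_div_two, Real.sin_pi_div_two_sub]
    ring

set_option maxHeartbeats 1000000 in
lemma main_lower (α : ℝ) (hα0 : 0 < α) (hα1 : α < 1) (μ : ℝ) (hμ : 0 < μ) (y : ℝ)
    (hy0 : 0 < y) (hyπ : y ≤ π) :
    2*Real.cos (α*π/2)/(π*(3 + 2*(T*π^(3:ℝ)))) * (1 + μ * y ^ (-(1+α)))
      ≤ ‖1 + (μ:ℂ) * psi α (Complex.I * (y:ℂ))‖ := by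
  have hπ := Real.pi_gt_three
  have hT := T_nonneg
  have hπ3 : (0:ℝ) < π^(3:ℝ) := Real.rpow_pos_of_pos Real.pi_pos 3
  set cosα := Real.cos (α*π/2) with hcosa
  have hcosp : 0 < cosα := by
    rw [hcosa]
    apply Real.cos_pos_of_mem_Ioo
    constructor <;> nlinarith [Real.pi_pos]
  have hcos1 : cosα ≤ 1 := Real.cos_le_one _
  set B : ℝ := 1 + T*π^(3:ℝ) with hB
  have hB1 : 1 ≤ B := by rw [hB]; nlinarith
  set c₀ : ℝ := 2*cosα/(π*(3 + 2*(T*π^(3:ℝ)))) with hc₀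
  have hden : (0:ℝ) < π*(3 + 2*(T*π^(3:ℝ))) := by nlinarith
  have hc₀p : 0 < c₀ := by rw [hc₀]; positivity
  have hc₀den : c₀ * (π*(3 + 2*(T*π^(3:ℝ)))) = 2*cosα := by
    rw [hc₀]; field_simp
  obtain ⟨hwsum, habsS, hreS⟩ := S_bounds α y hα0 hα1 hy0 hyπ
  set S : ℂ := ∑' k : ℤ,
      (Complex.I * (y:ℂ) + 2 * (k : ℂ) * (π : ℂ) * Complex.I) ^ (((-(2 + α) : ℝ)) : ℂ) with hS
  have hψ : psi α (Complex.I * (y:ℂ)) = (Complex.exp (Complex.I * (y:ℂ)) - 1) * S := by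
    rw [psi]
  -- rpow facts
  have hq2 : y ^ (-(2+α)) = y ^ (-(2+α)) := rfl
  have hsplit : y * y ^ (-(2+α)) = y ^ (-(1+α)) := by
    have h := Real.rpow_add hy0 1 (-(2+α))
    rw [Real.rpow_one] at h
    rw [← h]; ring_nf
  have hq1pos : (0:ℝ) < y ^ (-(1+α)) := Real.rpow_pos_of_pos hy0 _
  have hq2pos : (0:ℝ) < y ^ (-(2+α)) := Real.rpow_pos_of_pos hy0 _
  have h2π : 1 ≤ π^(2:ℝ) * y ^ (-(1+α)) := by
    have ha : π ^ (-(1+α)) ≤ y ^ (-(1+α)) :=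
      Real.rpow_le_rpow_of_nonpos hy0 hyπ (by linarith)
    have hb : π ^ (2:ℝ) * π ^ (-(1+α)) = π ^ (2 + -(1+α)) := (Real.rpow_add Real.pi_pos _ _).symm
    have hd : (1:ℝ) ≤ π ^ (2 + -(1+α)) := Real.one_le_rpow (by linarith) (by linarith)
    calc (1:ℝ) ≤ π ^ (2 + -(1+α)) := hd
      _ = π ^ (2:ℝ) * π ^ (-(1+α)) := hb.symm
      _ ≤ π ^ (2:ℝ) * y ^ (-(1+α)) :=
          mul_le_mul_of_nonneg_left ha (Real.rpow_nonneg Real.pi_pos.le _)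
  have hππ3 : π * π^(2:ℝ) = π^(3:ℝ) := by
    nth_rewrite 1 [← Real.rpow_one π]
    rw [← Real.rpow_add Real.pi_pos]; norm_num
  -- upper bound for |psi|
  have habsψ : ‖psi α (Complex.I * (y:ℂ))‖ ≤ B * y ^ (-(1+α)) := by
    rw [hψ, norm_mul]
    have h1 : ‖Complex.exp (Complex.I * (y:ℂ)) - 1‖ * ‖S‖
        ≤ y * (y ^ (-(2+α)) + T) :=
      mul_le_mul (abs_exp_I_sub_one y hy0.le) habsS (norm_nonneg _) hy0.le
    refine le_trans h1 ?_
    have h2 : y * T ≤ T * π^(3:ℝ) * y ^ (-(1+α)) := by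
      calc y * T ≤ π * T := mul_le_mul_of_nonneg_right hyπ hT
        _ = π * T * 1 := by ring
        _ ≤ π * T * (π^(2:ℝ) * y ^ (-(1+α))) := by
            apply mul_le_mul_of_nonneg_left h2π (by positivity)
        _ = T * (π * π^(2:ℝ)) * y ^ (-(1+α)) := by ring
        _ = T * π^(3:ℝ) * y ^ (-(1+α)) := by rw [hππ3]
    calc y * (y ^ (-(2+α)) + T) = y * y ^ (-(2+α)) + y * T := by ring
      _ = y ^ (-(1+α)) + y * T := by rw [hsplit]
      _ ≤ y ^ (-(1+α)) + T * π^(3:ℝ) * y ^ (-(1+α)) := by linarith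
      _ = B * y ^ (-(1+α)) := by rw [hB]; ring
  -- lower bound via real part
  have hsin0 : 0 ≤ Real.sin (y/2) :=
    Real.sin_nonneg_of_nonneg_of_le_pi (by linarith) (by linarith)
  have hsinp : y/π ≤ Real.sin (y/2) := by
    have h := Real.mul_le_sin (x := y/2) (by linarith) (by linarith)
    calc y/π = 2/π * (y/2) := by field_simp
      _ ≤ Real.sin (y/2) := h
  have hlow : Real.sin (y/2) * (1 + 2*μ*cosα*y ^ (-(2+α)))
      ≤ ‖1 + (μ:ℂ) * psi α (Complex.I * (y:ℂ))‖ := by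
    set γ : ℝ := (π - y)/2 with hγ
    have habs1 : ‖1 + (μ:ℂ) * psi α (Complex.I * (y:ℂ))‖
        = ‖Complex.exp ((γ:ℂ) * Complex.I)
            * (1 + (μ:ℂ) * psi α (Complex.I * (y:ℂ)))‖ := by
      rw [norm_mul, Complex.norm_exp_ofReal_mul_I, one_mul]
    have hexpand : Complex.exp ((γ:ℂ) * Complex.I) * (1 + (μ:ℂ) * psi α (Complex.I * (y:ℂ)))
        = Complex.exp ((γ:ℂ) * Complex.I)
          + ((μ * -(2*Real.sin (y/2)) : ℝ) : ℂ) * S := by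
      rw [hψ]
      have h5 : Complex.exp ((γ:ℂ) * Complex.I) * (1 + (μ:ℂ)
            * ((Complex.exp (Complex.I * (y:ℂ)) - 1) * S))
          = Complex.exp ((γ:ℂ) * Complex.I) + (μ:ℂ)
            * ((Complex.exp ((γ:ℂ) * Complex.I) * (Complex.exp (Complex.I * (y:ℂ)) - 1)) * S) := by
        ring
      rw [h5, rot_identity y]
      push_cast
      ring
    have hre : (Complex.exp ((γ:ℂ) * Complex.I)
          + ((μ * -(2*Real.sin (y/2)) : ℝ) : ℂ) * S).re
        = Real.cos γ + (μ * -(2*Real.sin (y/2))) * S.re := by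
      rw [Complex.add_re, Complex.exp_ofReal_mul_I_re, Complex.re_ofReal_mul]
    have hcosγ : Real.cos γ = Real.sin (y/2) := by
      rw [hγ, show (π - y)/2 = π/2 - y/2 by ring, Real.cos_pi_div_two_sub]
    rw [habs1, hexpand]
    refine le_trans ?_ (Complex.re_le_norm _)
    rw [hre, hcosγ]
    have hfinal : Real.sin (y/2) * (1 + 2*μ*cosα*y ^ (-(2+α)))
        ≤ Real.sin (y/2) + (μ * -(2*Real.sin (y/2))) * S.re := by
      have hprod : (μ * (2*Real.sin (y/2))) * S.re
          ≤ (μ * (2*Real.sin (y/2))) * (-(cosα * y ^ (-(2+α)))) := by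
        apply mul_le_mul_of_nonneg_left hreS (by positivity)
      nlinarith
    exact hfinal
  -- case split
  set q : ℝ := μ * y ^ (-(1+α)) with hq
  have hqpos : 0 < q := by rw [hq]; positivity
  rcases le_or_gt q (1/(2*B)) with hcase | hcase
  · -- small q
    have habs_lb : 1 - μ * ‖psi α (Complex.I * (y:ℂ))‖
        ≤ ‖1 + (μ:ℂ) * psi α (Complex.I * (y:ℂ))‖ := by
      have h := norm_add_le (1 + (μ:ℂ) * psi α (Complex.I * (y:ℂ)))
        (-((μ:ℂ) * psi α (Complex.I * (y:ℂ))))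
      simp only [add_neg_cancel_right] at h
      rw [norm_one, norm_neg, norm_mul] at h
      simp only [Complex.norm_real, Real.norm_eq_abs, abs_of_pos hμ] at h
      linarith
    have hμψ : μ * ‖psi α (Complex.I * (y:ℂ))‖ ≤ B * q := by
      rw [hq]
      calc μ * ‖psi α (Complex.I * (y:ℂ))‖ ≤ μ * (B * y ^ (-(1+α))) :=
            mul_le_mul_of_nonneg_left habsψ hμ.le
        _ = B * (μ * y ^ (-(1+α))) := by ring
    have hBq : B * q ≤ 1/2 := by
      have := mul_le_mul_of_nonneg_left hcase (by linarith : (0:ℝ) ≤ B)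
      rw [mul_one_div] at this
      have hBB : B / (2*B) = 1/2 := by field_simp
      linarith [this.trans_eq hBB]
    have hlhs : c₀ * (1 + q) ≤ 1/2 := by
      have hc₀small : c₀ ≤ 2/9 := by
        have h9 : (9:ℝ) ≤ π*(3 + 2*(T*π^(3:ℝ))) := by nlinarith
        nlinarith [hc₀den]
      have hq32 : 1 + q ≤ 3/2 := by
        have : q ≤ 1/2 := by
          have h2B : (2:ℝ) ≤ 2*B := by linarith
          have : 1/(2*B) ≤ 1/2 := by
            apply div_le_div_of_nonneg_left <;> linarith
          linarith
        linarith
      nlinarith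
    nlinarith [habs_lb, hμψ, hBq, hlhs]
  · -- large q
    have h1q : 1 + q ≤ (2*B + 1) * q := by
      have : 1 ≤ 2*B*q := by
        have h2B : (0:ℝ) < 2*B := by linarith
        rw [div_lt_iff₀ h2B] at hcase
        nlinarith
      nlinarith
    have hc₀q : c₀ * ((2*B + 1) * q) = (2*cosα/π) * q := by
      have h2B1 : 2*B + 1 = 3 + 2*(T*π^(3:ℝ)) := by rw [hB]; ring
      rw [h2B1, hc₀]
      field_simp
    have hmain : (2*cosα/π) * q ≤ Real.sin (y/2) * (1 + 2*μ*cosα*y ^ (-(2+α))) := by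
      have hstep : (2*cosα/π) * q ≤ Real.sin (y/2) * (2*μ*cosα*y ^ (-(2+α))) := by
        rw [hq]
        have hyq : y * y ^ (-(2+α)) = y ^ (-(1+α)) := hsplit
        have h6 : (y/π) * (2*μ*cosα*y ^ (-(2+α))) ≤ Real.sin (y/2) * (2*μ*cosα*y ^ (-(2+α))) := by
          apply mul_le_mul_of_nonneg_right hsinp (by positivity)
        have h7 : (y/π) * (2*μ*cosα*y ^ (-(2+α))) = (2*cosα/π) * (μ * y ^ (-(1+α))) := by
          rw [← hyq]
          field_simp
        linarith [h6, h7 ▸ h6]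
      nlinarith [hsin0]
    calc c₀ * (1 + q) ≤ c₀ * ((2*B + 1) * q) := by
          apply mul_le_mul_of_nonneg_left h1q hc₀p.le
      _ = (2*cosα/π) * q := hc₀q
      _ ≤ Real.sin (y/2) * (1 + 2*μ*cosα*y ^ (-(2+α))) := hmain
      _ ≤ ‖1 + (μ:ℂ) * psi α (Complex.I * (y:ℂ))‖ := hlow

end Stmt7Aux

set_option maxHeartbeats 1000000 in
/-- For `0 < α < 1` there is `C_α > 0` such that for all `μ > 0` and `0 < y ≤ π`,
the function `g(y) = (1 + μψ(iy))⁻¹` satisfies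
`|g'(y)| < C_α μ y^{-2-α} / (1 + μ y^{-1-α})²`. -/
theorem stmt7 (α : ℝ) (hα0 : 0 < α) (hα1 : α < 1) :
    ∃ C : ℝ, 0 < C ∧ ∀ μ : ℝ, 0 < μ → ∀ y : ℝ, 0 < y → y ≤ π →
      ‖deriv (fun t : ℝ => (1 + (μ : ℂ) * psi α (Complex.I * t))⁻¹) y‖ <
        C * μ * y ^ (-(2 + α)) / (1 + μ * y ^ (-(1 + α))) ^ 2 := by
  have hπ := Real.pi_gt_three
  have hT := Stmt7Aux.T_nonneg
  have hπ3 : (0:ℝ) < π^(3:ℝ) := Real.rpow_pos_of_pos Real.pi_pos 3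
  have hπ4 : (0:ℝ) < π^(4:ℝ) := Real.rpow_pos_of_pos Real.pi_pos 4
  set C₁ : ℝ := 4 + Stmt7Aux.T*π^(3:ℝ) + 3*Stmt7Aux.T*π^(4:ℝ) with hC₁
  have hC₁p : 0 < C₁ := by rw [hC₁]; nlinarith
  set c₀ : ℝ := 2*Real.cos (α*π/2)/(π*(3 + 2*(Stmt7Aux.T*π^(3:ℝ)))) with hc₀
  have hcosp : 0 < Real.cos (α*π/2) := by
    apply Real.cos_pos_of_mem_Ioo
    constructor <;> nlinarith [Real.pi_pos]
  have hc₀p : 0 < c₀ := by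
    rw [hc₀]
    have : (0:ℝ) < π*(3 + 2*(Stmt7Aux.T*π^(3:ℝ))) := by nlinarith [mul_nonneg (mul_nonneg Real.pi_pos.le hT) hπ3.le]
    positivity
  refine ⟨C₁/c₀^2 + 1, by positivity, ?_⟩
  intro μ hμ y hy0 hyπ
  obtain ⟨D, hD, hDb⟩ := Stmt7Aux.main_deriv α hα0 hα1 y hy0 hyπ
  have hlow := Stmt7Aux.main_lower α hα0 hα1 μ hμ y hy0 hyπ
  set N : ℝ := 1 + μ * y ^ (-(1+α)) with hN
  have hq1pos : (0:ℝ) < y ^ (-(1+α)) := Real.rpow_pos_of_pos hy0 _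
  have hq2pos : (0:ℝ) < y ^ (-(2+α)) := Real.rpow_pos_of_pos hy0 _
  have hNpos : 0 < N := by rw [hN]; positivity
  have hF : HasDerivAt (fun z : ℂ => 1 + (μ:ℂ) * psi α (Complex.I * z)) ((μ:ℂ) * D) ((y:ℝ):ℂ) :=
    (hD.const_mul (μ:ℂ)).const_add 1
  set a : ℝ := ‖1 + (μ:ℂ) * psi α (Complex.I * (y:ℂ))‖ with ha
  have haN : c₀ * N ≤ a := hlow
  have hapos : 0 < a := lt_of_lt_of_le (by positivity) haN
  have hne : (1 + (μ:ℂ) * psi α (Complex.I * (y:ℂ))) ≠ 0 := by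
    intro h
    rw [ha, h] at hapos
    simp at hapos
  have hinv := HasDerivAt.inv (c := fun z : ℂ => 1 + (μ:ℂ) * psi α (Complex.I * z))
    (x := ((y:ℝ):ℂ)) hF hne
  have hderiv : deriv (fun t : ℝ => (1 + (μ:ℂ) * psi α (Complex.I * (t:ℂ)))⁻¹) y
      = -((μ:ℂ)*D) / (1 + (μ:ℂ) * psi α (Complex.I * (y:ℂ)))^2 := by
    exact (hinv.comp_ofReal).deriv
  rw [hderiv]
  have hnorm : ‖-((μ:ℂ)*D) / (1 + (μ:ℂ) * psi α (Complex.I * (y:ℂ)))^2‖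
      = μ * ‖D‖ / a^2 := by
    rw [ha]
    simp [norm_div, norm_neg, norm_mul, norm_pow, Complex.norm_real,
      abs_of_pos hμ]
  rw [hnorm]
  have hstep1 : μ * ‖D‖ / a^2 ≤ (μ * (C₁ * y ^ (-(2+α)))) / ((c₀*N)^2) := by
    apply div_le_div₀ (by positivity) ?_ (by positivity) ?_
    · exact mul_le_mul_of_nonneg_left hDb hμ.le
    · exact pow_le_pow_left₀ (by positivity) haN 2
  have hstep2 : (μ * (C₁ * y ^ (-(2+α)))) / ((c₀*N)^2)
      = (C₁/c₀^2) * (μ * y ^ (-(2+α)) / N^2) := by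
    field_simp
  have hXpos : 0 < μ * y ^ (-(2+α)) / N^2 := by positivity
  have hstep3 : (C₁/c₀^2) * (μ * y ^ (-(2+α)) / N^2)
      < (C₁/c₀^2 + 1) * (μ * y ^ (-(2+α)) / N^2) :=
    mul_lt_mul_of_pos_right (lt_add_one _) hXpos
  have hfin : (C₁/c₀^2 + 1) * (μ * y ^ (-(2+α)) / N^2)
      = (C₁/c₀^2 + 1) * μ * y ^ (-(2+α)) / N^2 := by ring
  calc μ * ‖D‖ / a^2 ≤ (μ * (C₁ * y ^ (-(2+α)))) / ((c₀*N)^2) := hstep1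
    _ = (C₁/c₀^2) * (μ * y ^ (-(2+α)) / N^2) := hstep2
    _ < (C₁/c₀^2 + 1) * (μ * y ^ (-(2+α)) / N^2) := hstep3
    _ = (C₁/c₀^2 + 1) * μ * y ^ (-(2+α)) / N^2 := hfin
end

section
/- Let g : (0,π] → ℂ be differentiable with |g'(y)| ≤ M μ y^{-2-α}/(1+μ y^{-1-α})² for constants M, μ > 0 and 0 < α < 1, and suppose g extends continuously to [0,π]. Then for every positive integer k, |∫_0^π cos(ky) g(y) dy| ≤ C_α M k^{-1}, where C_α depends only on α. -/
open Complex Real MeasureTheory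

/-- Let `g : (0,π] → ℂ` be differentiable with
`|g'(y)| ≤ M μ y^{-2-α}/(1+μ y^{-1-α})²` and extend continuously to `[0,π]`.
Then `|∫_0^π cos(ky) g(y) dy| ≤ C_α M k⁻¹` with `C_α` depending only on `α`. -/
theorem stmt8 (α : ℝ) (hα0 : 0 < α) (hα1 : α < 1) :
    ∃ C : ℝ, 0 < C ∧ ∀ (M μ : ℝ), 0 < M → 0 < μ → ∀ (g g' : ℝ → ℂ),
      ContinuousOn g (Set.Icc 0 π) →
      (∀ y ∈ Set.Ioc (0 : ℝ) π, HasDerivAt g (g' y) y) →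
      (∀ y ∈ Set.Ioc (0 : ℝ) π,
        ‖g' y‖ ≤ M * μ * y ^ (-(2 + α)) / (1 + μ * y ^ (-(1 + α))) ^ 2) →
      ∀ k : ℕ, 1 ≤ k →
        ‖∫ y in (0 : ℝ)..π, (Real.cos (k * y) : ℂ) * g y‖ ≤ C * M / k := by
  refine ⟨1, one_pos, ?_⟩
  intro M μ hM hμ g g' hg hder hbound k hk
  have hπ : (0:ℝ) < π := Real.pi_pos
  have hk0 : (0:ℝ) < (k:ℝ) := by exact_mod_cast hk
  set b : ℝ → ℝ := fun y => M * μ * y ^ (-(2 + α)) / (1 + μ * y ^ (-(1 + α))) ^ 2 with hbdef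
  set φ : ℝ → ℝ := fun y => M / (1 + α) * (1 + μ * y ^ (-(1 + α)))⁻¹ with hφdef
  have hden : ∀ y : ℝ, 0 < y → 0 < 1 + μ * y ^ (-(1 + α)) := by
    intro y hy
    have := Real.rpow_pos_of_pos hy (-(1+α))
    nlinarith
  have hφ' : ∀ y : ℝ, 0 < y → HasDerivAt φ (b y) y := by
    intro y hy
    have h1 : HasDerivAt (fun y : ℝ => y ^ (-(1+α))) (-(1+α) * y ^ (-(1+α) - 1)) y :=
      Real.hasDerivAt_rpow_const (Or.inl hy.ne')
    have h2 : HasDerivAt (fun y : ℝ => 1 + μ * y ^ (-(1+α)))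
        (μ * (-(1+α) * y ^ (-(1+α) - 1))) y := (h1.const_mul μ).const_add 1
    have h3 := (h2.inv (hden y hy).ne').const_mul (M / (1+α))
    have he : -(1+α) - 1 = -(2+α) := by ring
    rw [he] at h3
    refine h3.congr_deriv ?_
    have hd := (hden y hy).ne'
    have hα1' : (1:ℝ) + α ≠ 0 := by positivity
    simp only [hbdef]
    field_simp
  have hbnn : ∀ y : ℝ, 0 < y → 0 ≤ b y := by
    intro y hy
    have h1 : (0:ℝ) ≤ y ^ (-(2+α)) := (Real.rpow_pos_of_pos hy _).le
    have h2 := hden y hy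
    positivity
  have hbcont : ContinuousOn b (Set.Ioi 0) := by
    intro y hy
    have hy' : (y:ℝ) ≠ 0 := (ne_of_gt hy)
    have c1 : ContinuousAt (fun y:ℝ => y ^ (-(2+α))) y :=
      Real.continuousAt_rpow_const y _ (Or.inl hy')
    have c2 : ContinuousAt (fun y:ℝ => y ^ (-(1+α))) y :=
      Real.continuousAt_rpow_const y _ (Or.inl hy')
    have cden : ContinuousAt (fun y:ℝ => (1 + μ * y ^ (-(1+α)))^2) y :=
      ((continuousAt_const.add (continuousAt_const.mul c2)).pow 2)
    have : ContinuousAt b y := by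
      refine ContinuousAt.div (continuousAt_const.mul c1) cden ?_
      exact pow_ne_zero 2 (hden y hy).ne'
    exact this.continuousWithinAt
  -- continuity of the integrand
  have hcc : Continuous (fun y : ℝ => (Real.cos ((k:ℝ) * y) : ℂ)) :=
    Complex.continuous_ofReal.comp (Real.continuous_cos.comp (continuous_const.mul continuous_id))
  have hfc : ContinuousOn (fun y : ℝ => (Real.cos ((k:ℝ) * y) : ℂ) * g y) (Set.Icc 0 π) :=
    hcc.continuousOn.mul hg
  -- bound on g
  obtain ⟨B0, hB0⟩ := (isCompact_Icc : IsCompact (Set.Icc (0:ℝ) π)).exists_bound_of_continuousOn hg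
  set B : ℝ := max B0 0 with hBdef
  have hB : ∀ x ∈ Set.Icc (0:ℝ) π, ‖g x‖ ≤ B := fun x hx => (hB0 x hx).trans (le_max_left _ _)
  have hBnn : 0 ≤ B := le_max_right _ _
  -- the auxiliary functions for integration by parts
  set V : ℝ → ℂ := fun y => ((Real.sin ((k:ℝ)*y) / k : ℝ) : ℂ) with hVdef
  set V' : ℝ → ℂ := fun y => ((Real.cos ((k:ℝ)*y) : ℝ) : ℂ) with hV'def
  have hVd : ∀ x : ℝ, HasDerivAt V (V' x) x := by
    intro x
    have hlin : HasDerivAt (fun y : ℝ => (k:ℝ) * y) (k:ℝ) x := by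
      simpa using (hasDerivAt_id x).const_mul (k:ℝ)
    have hsin : HasDerivAt (fun y : ℝ => Real.sin ((k:ℝ)*y)) (Real.cos ((k:ℝ)*x) * k) x :=
      (Real.hasDerivAt_sin ((k:ℝ)*x)).comp x hlin
    have hdiv := hsin.div_const (k:ℝ)
    have : Real.cos ((k:ℝ)*x) * k / k = Real.cos ((k:ℝ)*x) := by
      field_simp
    rw [this] at hdiv
    exact hdiv.ofReal_comp
  have hVnorm : ∀ y : ℝ, ‖V y‖ ≤ 1 / k := by
    intro y
    rw [hVdef]
    simp only [Complex.norm_real, Real.norm_eq_abs, abs_div, abs_of_pos hk0]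
    gcongr
    calc |Real.sin ((k:ℝ)*y)| ≤ 1 := Real.abs_sin_le_one _
    _ = 1 := rfl
  -- key estimate for each ε
  have key : ∀ ε : ℝ, 0 < ε → ε ≤ π →
      ‖∫ y in (0:ℝ)..π, (Real.cos ((k:ℝ) * y) : ℂ) * g y‖ ≤ M / k + 2 * B * ε := by
    intro ε hε0 hεπ
    have hsub : Set.uIcc ε π ⊆ Set.Ioc 0 π := by
      rw [Set.uIcc_of_le hεπ]
      exact fun x hx => ⟨lt_of_lt_of_le hε0 hx.1, hx.2⟩
    have hsub' : Set.Icc ε π ⊆ Set.Ioc 0 π := by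
      rw [← Set.uIcc_of_le hεπ]; exact hsub
    -- integrability of g'
    have hbint : IntervalIntegrable b volume ε π := by
      apply ContinuousOn.intervalIntegrable
      exact hbcont.mono (fun x hx => (hsub hx).1)
    have hg'int : IntervalIntegrable g' volume ε π := by
      rw [intervalIntegrable_iff_integrableOn_Ioc_of_le hεπ]
      have hmeas : AEStronglyMeasurable g' (volume.restrict (Set.Ioc ε π)) := by
        refine ((stronglyMeasurable_deriv g).aestronglyMeasurable.restrict).congr ?_
        refine ((ae_restrict_iff' measurableSet_Ioc).2 (ae_of_all _ ?_))
        intro y hy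
        exact ((hder y ⟨lt_of_lt_of_le hε0 hy.1.le, hy.2⟩).deriv)
      refine Integrable.mono' (g := b) ?_ hmeas ?_
      · exact (hbint.def').mono_set (by rw [Set.uIoc_of_le hεπ])
      · refine (ae_restrict_iff' measurableSet_Ioc).2 (ae_of_all _ ?_)
        intro y hy
        exact hbound y ⟨lt_of_lt_of_le hε0 hy.1.le, hy.2⟩
    -- integration by parts on [ε, π]
    have hparts := intervalIntegral.integral_mul_deriv_eq_deriv_mul
      (u := g) (v := V) (u' := g') (v' := V') (a := ε) (b := π)
      (fun x hx => hder x (hsub hx)) (fun x _ => hVd x) hg'int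
      ((Complex.continuous_ofReal.comp (Real.continuous_cos.comp
        (continuous_const.mul continuous_id))).intervalIntegrable ε π)
    have hVπ : V π = 0 := by
      rw [hVdef]
      simp [Real.sin_nat_mul_pi k]
    rw [hVπ, mul_zero, zero_sub] at hparts
    -- FTC for the bound
    have hftc : (∫ y in ε..π, b y) = φ π - φ ε :=
      intervalIntegral.integral_eq_sub_of_hasDerivAt
        (fun y hy => hφ' y (hsub hy).1) hbint
    have hφπ : φ π - φ ε ≤ M := by
      have h1 : 0 < 1 + μ * ε ^ (-(1+α)) := hden ε hε0
      have h2 : 0 < 1 + μ * π ^ (-(1+α)) := hden π hπ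
      have hφε : 0 ≤ φ ε := by
        rw [hφdef]
        have := inv_nonneg.2 h1.le
        positivity
      have hφπ' : φ π ≤ M := by
        rw [hφdef]
        have hinv : (1 + μ * π ^ (-(1+α)))⁻¹ ≤ 1 := by
          rw [inv_le_one₀ h2]
          have := Real.rpow_pos_of_pos hπ (-(1+α))
          nlinarith
        calc M / (1+α) * (1 + μ * π ^ (-(1+α)))⁻¹ ≤ M / (1+α) * 1 := by
              apply mul_le_mul_of_nonneg_left hinv
              positivity
          _ ≤ M := by
              rw [mul_one]
              rw [div_le_iff₀ (by linarith : (0:ℝ) < 1+α)]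
              nlinarith
      linarith
    -- bound on ∫ g' * V
    have hGV : ‖∫ y in ε..π, g' y * V y‖ ≤ M / k := by
      have hb1k : IntervalIntegrable (fun y => b y / k) volume ε π := hbint.div_const _
      have h := intervalIntegral.norm_integral_le_abs_of_norm_le (μ := volume)
        (f := fun y => g' y * V y) (g := fun y => b y / k) (a := ε) (b := π)
        ?_ hb1k
      · have : (∫ y in ε..π, b y / k) = (φ π - φ ε) / k := by
          rw [intervalIntegral.integral_div, hftc]
        rw [this] at h
        refine h.trans ?_
        rw [_root_.abs_of_nonneg (by
          apply div_nonneg _ hk0.le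
          have h1 : 0 ≤ φ π - φ ε := by
            rw [← hftc]
            apply intervalIntegral.integral_nonneg hεπ
            intro y hy
            exact hbnn y (lt_of_lt_of_le hε0 hy.1)
          exact h1)]
        gcongr
      · refine (ae_restrict_iff' measurableSet_uIoc).2 (ae_of_all _ ?_)
        intro y hy
        rw [Set.uIoc_of_le hεπ] at hy
        have hy' : y ∈ Set.Ioc (0:ℝ) π := ⟨lt_of_lt_of_le hε0 hy.1.le, hy.2⟩
        calc ‖g' y * V y‖ = ‖g' y‖ * ‖V y‖ := norm_mul _ _
          _ ≤ b y * (1/k) := by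
              apply mul_le_mul (hbound y hy') (hVnorm y) (norm_nonneg _)
              exact hbnn y hy'.1
          _ = b y / k := by ring
    -- interval integrability of the main integrand on subintervals
    have hfint : ∀ c d : ℝ, Set.uIcc c d ⊆ Set.Icc 0 π →
        IntervalIntegrable (fun y => (Real.cos ((k:ℝ) * y) : ℂ) * g y) volume c d :=
      fun c d hcd => (hfc.mono hcd).intervalIntegrable
    have h0ε : Set.uIcc 0 ε ⊆ Set.Icc 0 π := by
      rw [Set.uIcc_of_le hε0.le]
      exact Set.Icc_subset_Icc le_rfl hεπ
    have hεπ' : Set.uIcc ε π ⊆ Set.Icc 0 π := by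
      rw [Set.uIcc_of_le hεπ]
      exact Set.Icc_subset_Icc hε0.le le_rfl
    have hsplit : (∫ y in (0:ℝ)..π, (Real.cos ((k:ℝ) * y) : ℂ) * g y)
        = (∫ y in (0:ℝ)..ε, (Real.cos ((k:ℝ) * y) : ℂ) * g y)
          + ∫ y in ε..π, (Real.cos ((k:ℝ) * y) : ℂ) * g y :=
      (intervalIntegral.integral_add_adjacent_intervals (hfint 0 ε h0ε) (hfint ε π hεπ')).symm
    -- bound on the small piece
    have hsmall : ‖∫ y in (0:ℝ)..ε, (Real.cos ((k:ℝ) * y) : ℂ) * g y‖ ≤ B * ε := by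
      have := intervalIntegral.norm_integral_le_of_norm_le_const
        (C := B) (a := (0:ℝ)) (b := ε)
        (f := fun y => (Real.cos ((k:ℝ) * y) : ℂ) * g y) ?_
      · rw [sub_zero, abs_of_pos hε0] at this
        exact this
      · intro x hx
        rw [Set.uIoc_of_le hε0.le] at hx
        have hx' : x ∈ Set.Icc (0:ℝ) π := ⟨hx.1.le, hx.2.trans hεπ⟩
        calc ‖(Real.cos ((k:ℝ) * x) : ℂ) * g x‖ = |Real.cos ((k:ℝ) * x)| * ‖g x‖ := by
              rw [norm_mul, Complex.norm_real, Real.norm_eq_abs]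
          _ ≤ 1 * B := mul_le_mul (Real.abs_cos_le_one _) (hB x hx') (norm_nonneg _) one_pos.le
          _ = B := one_mul B
    -- bound on the main piece via integration by parts
    have hmain : ‖∫ y in ε..π, (Real.cos ((k:ℝ) * y) : ℂ) * g y‖ ≤ B * ε + M / k := by
      have hcongr : (∫ y in ε..π, (Real.cos ((k:ℝ) * y) : ℂ) * g y)
          = ∫ y in ε..π, g y * V' y := by
        apply intervalIntegral.integral_congr
        intro y _
        simp only [hV'def]
        ring
      rw [hcongr, hparts]
      have hVε : ‖g ε * V ε‖ ≤ B * ε := by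
        rw [norm_mul]
        have h1 : ‖g ε‖ ≤ B := hB ε ⟨hε0.le, hεπ⟩
        have h2 : ‖V ε‖ ≤ ε := by
          rw [hVdef]
          simp only [Complex.norm_real, Real.norm_eq_abs, abs_div, abs_of_pos hk0]
          rw [div_le_iff₀ hk0]
          calc |Real.sin ((k:ℝ)*ε)| ≤ |(k:ℝ)*ε| := Real.abs_sin_le_abs
            _ = ε * k := by rw [_root_.abs_of_nonneg (by positivity)]; ring
        exact mul_le_mul h1 h2 (norm_nonneg _) hBnn
      calc ‖-(g ε * V ε) - ∫ y in ε..π, g' y * V y‖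
          ≤ ‖-(g ε * V ε)‖ + ‖∫ y in ε..π, g' y * V y‖ := norm_sub_le _ _
        _ ≤ B * ε + M / k := by
            rw [norm_neg]
            exact add_le_add hVε hGV
    rw [hsplit]
    calc ‖(∫ y in (0:ℝ)..ε, (Real.cos ((k:ℝ) * y) : ℂ) * g y)
          + ∫ y in ε..π, (Real.cos ((k:ℝ) * y) : ℂ) * g y‖
        ≤ ‖∫ y in (0:ℝ)..ε, (Real.cos ((k:ℝ) * y) : ℂ) * g y‖
          + ‖∫ y in ε..π, (Real.cos ((k:ℝ) * y) : ℂ) * g y‖ := norm_add_le _ _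
      _ ≤ B * ε + (B * ε + M / k) := add_le_add hsmall hmain
      _ = M / k + 2 * B * ε := by ring
  -- conclude by taking ε → 0
  have hfinal : ‖∫ y in (0:ℝ)..π, (Real.cos ((k:ℝ) * y) : ℂ) * g y‖ ≤ M / k := by
    refine le_of_forall_pos_le_add fun δ hδ => ?_
    set ε : ℝ := min (δ / (2*B+1)) π with hεdef
    have hε0 : 0 < ε := lt_min (by positivity) hπ
    have hεπ : ε ≤ π := min_le_right _ _
    have h1 := key ε hε0 hεπ
    have h2 : 2 * B * ε ≤ δ := by
      have hεle : ε ≤ δ / (2*B+1) := min_le_left _ _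
      have h3 : 2 * B * ε ≤ 2 * B * (δ / (2*B+1)) :=
        mul_le_mul_of_nonneg_left hεle (by positivity)
      have h4 : 2 * B * (δ / (2*B+1)) ≤ δ := by
        rw [mul_div_assoc', div_le_iff₀ (by positivity : (0:ℝ) < 2*B+1)]
        nlinarith
      linarith
    linarith
  calc ‖∫ y in (0:ℝ)..π, (Real.cos ((k:ℝ) * y) : ℂ) * g y‖ ≤ M / k := hfinal
    _ = 1 * M / k := by ring
end

section
/- For 0 < α < 1 and μ > 0, ∫_0^π μ y^{-2-α}/(1 + μ y^{-1-α})² dy ≤ C_α, where C_α depends only on α and not on μ. -/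
open Real MeasureTheory

/-- For `0 < α < 1` there is `C_α > 0`, independent of `μ`, with
`∫_0^π μ y^{-2-α}/(1 + μ y^{-1-α})² dy ≤ C_α` for all `μ > 0`. -/
theorem stmt9 (α : ℝ) (hα0 : 0 < α) (hα1 : α < 1) :
    ∃ C : ℝ, 0 < C ∧ ∀ μ : ℝ, 0 < μ →
      ∫ y in Set.Ioc (0 : ℝ) π,
        μ * y ^ (-(2 + α)) / (1 + μ * y ^ (-(1 + α))) ^ 2 ≤ C := by
  have hα : (0:ℝ) < 1 + α := by linarith
  refine ⟨2, by norm_num, fun μ hμ => ?_⟩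
  set f : ℝ → ℝ := fun y => μ * y ^ (-(2 + α)) / (1 + μ * y ^ (-(1 + α))) ^ 2 with hfdef
  set b : ℝ := μ ^ ((1:ℝ)/(1+α)) with hbdef
  have hb0 : 0 < b := Real.rpow_pos_of_pos hμ _
  have hbpow : b ^ (1+α) = μ := by
    rw [hbdef, ← Real.rpow_mul hμ.le, one_div_mul_cancel (ne_of_gt hα), Real.rpow_one]
  have hbpow' : b ^ (-(1+α)) = μ⁻¹ := by
    rw [Real.rpow_neg hb0.le, hbpow]
  -- pointwise identity and bounds
  have hid : ∀ y : ℝ, 0 < y → μ * y ^ (-(2 + α)) = μ⁻¹ * y ^ α * (μ * y ^ (-(1 + α))) ^ 2 := by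
    intro y hy
    have h2 : (y ^ (-(1+α))) ^ (2:ℕ) = y ^ ((-(1+α)) * 2) := by
      rw [← Real.rpow_natCast (y ^ (-(1+α))) 2, ← Real.rpow_mul hy.le]
      norm_num
    rw [mul_pow, h2]
    have h3 : y ^ α * y ^ ((-(1+α)) * 2) = y ^ (-(2+α)) := by
      rw [← Real.rpow_add hy]; ring_nf
    calc μ * y ^ (-(2+α)) = (μ⁻¹ * μ ^ 2) * (y ^ α * y ^ ((-(1+α)) * 2)) := by
          rw [h3]; field_simp
      _ = μ⁻¹ * y ^ α * (μ ^ 2 * y ^ ((-(1+α)) * 2)) := by ring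
  have ht0 : ∀ y : ℝ, 0 < y → 0 < μ * y ^ (-(1 + α)) := fun y hy =>
    mul_pos hμ (Real.rpow_pos_of_pos hy _)
  have hbd1 : ∀ y : ℝ, 0 < y → f y ≤ μ⁻¹ * y ^ α := by
    intro y hy
    have ht := ht0 y hy
    have hden : (0:ℝ) < (1 + μ * y ^ (-(1 + α))) ^ 2 := by positivity
    rw [hfdef]
    simp only
    rw [div_le_iff₀ hden, hid y hy]
    have hya : (0:ℝ) ≤ μ⁻¹ * y ^ α := by positivity
    nlinarith [sq_nonneg (μ * y ^ (-(1+α)))]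
  have hbd2 : ∀ y : ℝ, 0 < y → f y ≤ μ * y ^ (-(2 + α)) := by
    intro y hy
    have ht := ht0 y hy
    apply div_le_self (by positivity)
    nlinarith
  have hfnn : ∀ y : ℝ, 0 < y → 0 ≤ f y := by
    intro y hy
    have := ht0 y hy
    apply div_nonneg (by positivity) (by positivity)
  -- integrability of the upper bound y ↦ μ⁻¹ * y ^ α on Ioc 0 π
  have hint1 : IntegrableOn (fun y : ℝ => μ⁻¹ * y ^ α) (Set.Ioc 0 π) := by
    have h := intervalIntegral.intervalIntegrable_rpow' (a := 0) (b := π)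
      (by linarith : (-1:ℝ) < α)
    rw [intervalIntegrable_iff_integrableOn_Ioc_of_le pi_pos.le] at h
    exact h.const_mul _
  -- measurability of f
  have hfm : Measurable f := by fun_prop
  -- integrability of f on Ioc 0 π
  have hintf : IntegrableOn f (Set.Ioc 0 π) := by
    refine Integrable.mono hint1 hfm.aestronglyMeasurable.restrict ?_
    rw [ae_restrict_iff' measurableSet_Ioc]
    filter_upwards with y hy
    rw [Real.norm_eq_abs, Real.norm_eq_abs, abs_of_nonneg (hfnn y hy.1),
      abs_of_nonneg (mul_nonneg (inv_nonneg.mpr hμ.le) (Real.rpow_nonneg hy.1.le _))]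
    exact hbd1 y hy.1
  -- value of first-type integral
  have key1 : ∀ c : ℝ, 0 < c → ∫ y in Set.Ioc 0 c, μ⁻¹ * y ^ α = μ⁻¹ * (c ^ (α+1) / (α+1)) := by
    intro c hc
    rw [← intervalIntegral.integral_of_le hc.le, intervalIntegral.integral_const_mul,
      integral_rpow (Or.inl (by linarith)), Real.zero_rpow (by linarith), sub_zero]
  have hbμ : b ^ (α+1) = μ := by rw [add_comm]; exact hbpow
  rcases le_total π b with hπb | hbπ
  · -- no split needed: f ≤ μ⁻¹ y^α on the whole interval
    have h1 : ∫ y in Set.Ioc (0:ℝ) π, f y ≤ ∫ y in Set.Ioc (0:ℝ) π, μ⁻¹ * y ^ α := by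
      apply setIntegral_mono_on hintf hint1 measurableSet_Ioc
      exact fun y hy => hbd1 y hy.1
    rw [key1 π pi_pos] at h1
    have hπle : π ^ (α+1) ≤ b ^ (α+1) :=
      Real.rpow_le_rpow pi_pos.le hπb (by linarith)
    have h2 : μ⁻¹ * (π ^ (α+1) / (α+1)) ≤ μ⁻¹ * (b ^ (α+1) / (α+1)) := by gcongr
    rw [hbμ] at h2
    have h3 : μ⁻¹ * (μ / (α+1)) = 1 / (α+1) := by
      field_simp
    rw [h3] at h2
    have : (1:ℝ) / (α+1) ≤ 2 := by
      rw [div_le_iff₀ (by linarith)]; nlinarith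
    linarith
  · -- split at b
    have hintfA : IntegrableOn f (Set.Ioc 0 b) := hintf.mono_set (Set.Ioc_subset_Ioc_right hbπ)
    have hintfB : IntegrableOn f (Set.Ioc b π) := hintf.mono_set (Set.Ioc_subset_Ioc_left hb0.le)
    have hsplit : ∫ y in Set.Ioc (0:ℝ) π, f y =
        (∫ y in Set.Ioc (0:ℝ) b, f y) + ∫ y in Set.Ioc b π, f y := by
      rw [← setIntegral_union (Set.Ioc_disjoint_Ioc_of_le le_rfl) measurableSet_Ioc hintfA hintfB,
        Set.Ioc_union_Ioc_eq_Ioc hb0.le hbπ]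
    rw [hsplit]
    -- first piece
    have hA : ∫ y in Set.Ioc (0:ℝ) b, f y ≤ 1/(1+α) := by
      have h1 := setIntegral_mono_on hintfA
        (hint1.mono_set (Set.Ioc_subset_Ioc_right hbπ)) measurableSet_Ioc
        (fun y hy => hbd1 y hy.1)
      rw [key1 b hb0, hbμ, mul_div_assoc', inv_mul_cancel₀ (ne_of_gt hμ)] at h1
      rw [add_comm α 1] at h1
      exact h1
    -- second piece
    have hg2cont : ContinuousOn (fun y : ℝ => μ * y ^ (-(2+α))) (Set.Icc b π) :=
      continuousOn_const.mul (ContinuousOn.rpow_const continuousOn_id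
        (fun x hx => Or.inl (ne_of_gt (lt_of_lt_of_le hb0 hx.1))))
    have hint2 : IntegrableOn (fun y : ℝ => μ * y ^ (-(2+α))) (Set.Ioc b π) :=
      (hg2cont.integrableOn_Icc).mono_set Set.Ioc_subset_Icc_self
    have hB : ∫ y in Set.Ioc b π, f y ≤ 1/(1+α) := by
      have hmono := setIntegral_mono_on hintfB hint2 measurableSet_Ioc
        (fun y hy => hbd2 y (lt_trans hb0 hy.1))
      have hval : ∫ y in Set.Ioc b π, μ * y ^ (-(2+α)) =
          μ * ((π ^ (-(2+α)+1) - b ^ (-(2+α)+1)) / (-(2+α)+1)) := by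
        rw [← intervalIntegral.integral_of_le hbπ, intervalIntegral.integral_const_mul,
          integral_rpow (Or.inr ⟨by intro h; linarith, by
            intro h
            rcases Set.mem_uIcc.mp h with ⟨h1, h2⟩ | ⟨h1, h2⟩
            · linarith
            · linarith [pi_pos]⟩)]
      have he : -(2+α)+1 = -(1+α) := by ring
      rw [he] at hval
      rw [hbpow'] at hval
      set p : ℝ := π ^ (-(1+α)) with hp
      have hπnn : (0:ℝ) ≤ p := (Real.rpow_pos_of_pos pi_pos _).le
      have heq : μ * ((p - μ⁻¹) / -(1+α)) = (1 - μ * p) / (1+α) := by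
        have hmm : μ * μ⁻¹ = 1 := mul_inv_cancel₀ (ne_of_gt hμ)
        rw [div_neg, mul_neg, mul_div_assoc', ← neg_div]
        congr 1
        rw [mul_sub, hmm]; ring
      have hle : μ * ((p - μ⁻¹) / -(1+α)) ≤ 1/(1+α) := by
        rw [heq]
        gcongr
        nlinarith [mul_nonneg hμ.le hπnn]
      rw [hval] at hmono
      linarith
    have hfrac : 1/(1+α) ≤ 1 := by
      rw [div_le_one hα]; linarith
    linarith
end

section
/- Let 0 < α < 1, π/2 < θ < (α+3)π/(4α+4), and μ > 0. There exists c > 0 depending only on α such that for z = r e^{±iθ} with 0 < r ≤ π/sin θ: |z² + μ z^{1-α}| ≥ C_α μ |z|^{1-α} if |z| ≤ c μ^{1/(1+α)}, and |z² + μ z^{1-α}| ≥ C_α |z|² if c μ^{1/(1+α)} ≤ |z| ≤ π/sin θ. -/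
open Complex Real

/-- Principal power of `r e^{iψ}` for `r > 0` and `ψ ∈ (-π, π]`. -/
lemma aux_cpow (r ψ β : ℝ) (hr : 0 < r) (hψ1 : -π < ψ) (hψ2 : ψ ≤ π) :
    ((r : ℂ) * Complex.exp ((ψ : ℂ) * Complex.I)) ^ ((β : ℝ) : ℂ)
      = ((r ^ β : ℝ) : ℂ) * Complex.exp (((β * ψ : ℝ) : ℂ) * Complex.I) := by
  have hz : (r : ℂ) * Complex.exp ((ψ : ℂ) * Complex.I) ≠ 0 :=
    mul_ne_zero (by exact_mod_cast hr.ne') (Complex.exp_ne_zero _)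
  have habs : ‖(r : ℂ) * Complex.exp ((ψ : ℂ) * Complex.I)‖ = r := by
    rw [norm_mul, Complex.norm_exp_ofReal_mul_I, Complex.norm_real, Real.norm_eq_abs, abs_of_pos hr, mul_one]
  have harg : Complex.arg ((r : ℂ) * Complex.exp ((ψ : ℂ) * Complex.I)) = ψ := by
    rw [Complex.exp_mul_I]
    exact_mod_cast Complex.arg_mul_cos_add_sin_mul_I hr ⟨hψ1, hψ2⟩
  rw [Complex.cpow_def_of_ne_zero hz]
  simp only [Complex.log, habs, harg]
  rw [Real.rpow_def_of_pos hr]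
  push_cast
  rw [← Complex.exp_add]
  congr 1
  ring

lemma aux_abs (A m x : ℝ) :
    ‖(A : ℂ) * Complex.exp ((x : ℂ) * Complex.I) + (m : ℂ)‖
      = Real.sqrt (A ^ 2 + m ^ 2 + 2 * A * m * Real.cos x) := by
  rw [Complex.norm_def]
  congr 1
  rw [Complex.exp_mul_I]
  simp only [Complex.normSq_apply, Complex.add_re, Complex.add_im, Complex.mul_re,
    Complex.mul_im, Complex.ofReal_re, Complex.ofReal_im, Complex.add_re, Complex.add_im,
    Complex.cos_ofReal_re, Complex.cos_ofReal_im, Complex.sin_ofReal_re, Complex.sin_ofReal_im,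
    Complex.mul_I_re, Complex.mul_I_im, Complex.I_re, Complex.I_im]
  nlinarith [Real.sin_sq_add_cos_sq x]

lemma aux_sqrt (A m d : ℝ) (hA : 0 ≤ A) (hm : 0 ≤ m) (hd0 : 0 < d) (hd1 : d ≤ 1) :
    Real.sqrt d * max A m ≤ Real.sqrt (A ^ 2 + m ^ 2 + 2 * A * m * (d - 1)) := by
  have hmax : 0 ≤ max A m := le_max_of_le_left hA
  rw [← Real.sqrt_sq hmax, ← Real.sqrt_mul hd0.le]
  apply Real.sqrt_le_sqrt
  rcases le_total A m with h | h
  · rw [max_eq_right h]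
    nlinarith [sq_nonneg (A - m), mul_nonneg hd0.le (sq_nonneg A)]
  · rw [max_eq_left h]
    nlinarith [sq_nonneg (A - m), mul_nonneg hd0.le (sq_nonneg m)]

/-- For `0 < α < 1`, `π/2 < θ < (α+3)π/(4α+4)`, `μ > 0`: there is `c > 0` (depending only
on `α`) and `C_α > 0` such that for `z = re^{±iθ}` with `0 < r ≤ π/sin θ`:
`|z² + μz^{1-α}| ≥ C_α μ|z|^{1-α}` if `|z| ≤ cμ^{1/(1+α)}`, and
`|z² + μz^{1-α}| ≥ C_α |z|²` if `cμ^{1/(1+α)} ≤ |z| ≤ π/sin θ`. -/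
theorem stmt11 (α : ℝ) (hα0 : 0 < α) (hα1 : α < 1)
    (θ : ℝ) (hθ1 : π / 2 < θ) (hθ2 : θ < (α + 3) * π / (4 * α + 4)) :
    ∃ c : ℝ, 0 < c ∧ ∃ C : ℝ, 0 < C ∧ ∀ μ : ℝ, 0 < μ → ∀ s : ℝ, (s = 1 ∨ s = -1) →
      ∀ r : ℝ, 0 < r → r ≤ π / Real.sin θ →
      ∀ z : ℂ, z = (r : ℂ) * Complex.exp ((s : ℂ) * (θ : ℂ) * Complex.I) →
        (‖z‖ ≤ c * μ ^ (1 / (1 + α)) →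
          C * μ * ‖z‖ ^ (1 - α) ≤
            ‖z ^ 2 + (μ : ℂ) * z ^ (((1 - α : ℝ)) : ℂ)‖) ∧
        (c * μ ^ (1 / (1 + α)) ≤ ‖z‖ →
          C * ‖z‖ ^ 2 ≤
            ‖z ^ 2 + (μ : ℂ) * z ^ (((1 - α : ℝ)) : ℂ)‖) := by
  have hπ := Real.pi_pos
  have hθ0 : 0 < θ := lt_trans (by positivity) hθ1
  have hθπ : θ < π := by
    have h : (α + 3) * π / (4 * α + 4) < π := by
      rw [div_lt_iff₀ (by linarith)]
      nlinarith
    linarith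
  set φ : ℝ := (1 + α) * θ with hφdef
  have hφ0 : π / 2 < φ := by nlinarith
  have hφπ : φ < π := by
    have h2 : θ < (α + 3) * π / (4 * (1 + α)) := by
      have : (4 : ℝ) * α + 4 = 4 * (1 + α) := by ring
      rwa [this] at hθ2
    have : φ < (1 + α) * ((α + 3) * π / (4 * (1 + α))) := by
      apply mul_lt_mul_of_pos_left h2 (by linarith)
    have heq : (1 + α) * ((α + 3) * π / (4 * (1 + α))) = (α + 3) * π / 4 := by
      field_simp
    rw [heq] at this
    nlinarith
  have hcos_neg : Real.cos φ ≤ 0 :=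
    Real.cos_nonpos_of_pi_div_two_le_of_le hφ0.le (by linarith)
  have hcos_gt : -1 < Real.cos φ := by
    have := Real.cos_lt_cos_of_nonneg_of_le_pi (by positivity : (0:ℝ) ≤ φ) le_rfl hφπ
    rwa [Real.cos_pi] at this
  set d : ℝ := 1 + Real.cos φ with hddef
  have hd0 : 0 < d := by linarith
  have hd1 : d ≤ 1 := by linarith
  refine ⟨1, one_pos, Real.sqrt d, Real.sqrt_pos.mpr hd0, ?_⟩
  intro μ hμ s hs r hr hrπ z hz
  -- normalize s·θ
  obtain ⟨hs1, hs2, hscos⟩ : -π < s * θ ∧ s * θ ≤ π ∧ Real.cos ((1 + α) * (s * θ)) = Real.cos φ := by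
    rcases hs with rfl | rfl
    · exact ⟨by linarith, by linarith, by rw [one_mul]⟩
    · refine ⟨by linarith, by linarith, ?_⟩
      have : (1 + α) * (-1 * θ) = -φ := by ring
      rw [this, Real.cos_neg]
  have hz' : z = (r : ℂ) * Complex.exp (((s * θ : ℝ) : ℂ) * Complex.I) := by
    rw [hz]; push_cast; ring_nf
  have habsz : ‖z‖ = r := by
    rw [hz', norm_mul, Complex.norm_exp_ofReal_mul_I, Complex.norm_real, Real.norm_eq_abs, abs_of_pos hr, mul_one]
  have hr2 : r ^ (1 - α) * r ^ (1 + α) = r ^ 2 := by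
    rw [← Real.rpow_add hr]
    norm_num
  -- factorization
  have h1 : Complex.exp ((((1 - α) * (s * θ) : ℝ) : ℂ) * Complex.I) *
      Complex.exp ((((1 + α) * (s * θ) : ℝ) : ℂ) * Complex.I) =
      Complex.exp (((s * θ : ℝ) : ℂ) * Complex.I) ^ 2 := by
    rw [sq, ← Complex.exp_add, ← Complex.exp_add]
    congr 1
    push_cast
    ring
  have h2 : ((r ^ (1 - α) : ℝ) : ℂ) * ((r ^ (1 + α) : ℝ) : ℂ) = ((r : ℂ)) ^ 2 := by
    rw [← Complex.ofReal_mul, hr2]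
    push_cast
    ring
  have key : z ^ 2 + (μ : ℂ) * z ^ (((1 - α : ℝ)) : ℂ)
      = ((r ^ (1 - α) : ℝ) : ℂ) * Complex.exp ((((1 - α) * (s * θ) : ℝ) : ℂ) * Complex.I) *
        (((r ^ (1 + α) : ℝ) : ℂ) * Complex.exp ((((1 + α) * (s * θ) : ℝ) : ℂ) * Complex.I)
          + (μ : ℂ)) := by
    rw [hz', aux_cpow r (s * θ) (1 - α) hr hs1 hs2, mul_add]
    congr 1
    · rw [mul_pow, ← h2, ← h1]
      ring
    · ring
  have habsfac : ‖z ^ 2 + (μ : ℂ) * z ^ (((1 - α : ℝ)) : ℂ)‖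
      = r ^ (1 - α) * Real.sqrt ((r ^ (1 + α)) ^ 2 + μ ^ 2 +
          2 * (r ^ (1 + α)) * μ * (d - 1)) := by
    rw [key, norm_mul, norm_mul, Complex.norm_exp_ofReal_mul_I, Complex.norm_real, Real.norm_eq_abs,
      abs_of_pos (Real.rpow_pos_of_pos hr _), mul_one, aux_abs, hscos]
    congr 3
    rw [hddef]; ring
  have hbound : Real.sqrt d * max (r ^ (1 + α)) μ ≤
      Real.sqrt ((r ^ (1 + α)) ^ 2 + μ ^ 2 + 2 * (r ^ (1 + α)) * μ * (d - 1)) :=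
    aux_sqrt _ _ _ (Real.rpow_pos_of_pos hr _).le hμ.le hd0 hd1
  have hrpow_pos : (0:ℝ) < r ^ (1 - α) := Real.rpow_pos_of_pos hr _
  have hexpμ : (μ ^ (1 / (1 + α)) : ℝ) ^ (1 + α) = μ := by
    rw [← Real.rpow_mul hμ.le, one_div, inv_mul_cancel₀ (by linarith : (1:ℝ) + α ≠ 0),
      Real.rpow_one]
  constructor
  · intro hle
    rw [habsz, one_mul] at hle
    have hAμ : r ^ (1 + α) ≤ μ := by
      calc r ^ (1 + α) ≤ (μ ^ (1 / (1 + α))) ^ (1 + α) :=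
            Real.rpow_le_rpow hr.le hle (by linarith)
        _ = μ := hexpμ
    have hmax : μ ≤ max (r ^ (1 + α)) μ := le_max_right _ _
    rw [habsfac, habsz]
    calc Real.sqrt d * μ * r ^ (1 - α)
        ≤ (Real.sqrt d * max (r ^ (1 + α)) μ) * r ^ (1 - α) := by
          apply mul_le_mul_of_nonneg_right _ hrpow_pos.le
          exact mul_le_mul_of_nonneg_left hmax (Real.sqrt_nonneg d)
      _ ≤ Real.sqrt ((r ^ (1 + α)) ^ 2 + μ ^ 2 + 2 * (r ^ (1 + α)) * μ * (d - 1))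
            * r ^ (1 - α) := mul_le_mul_of_nonneg_right hbound hrpow_pos.le
      _ = r ^ (1 - α) * Real.sqrt ((r ^ (1 + α)) ^ 2 + μ ^ 2 +
            2 * (r ^ (1 + α)) * μ * (d - 1)) := by ring
  · intro hge
    rw [habsz, one_mul] at hge
    have hAμ : μ ≤ r ^ (1 + α) := by
      calc μ = (μ ^ (1 / (1 + α))) ^ (1 + α) := hexpμ.symm
        _ ≤ r ^ (1 + α) := Real.rpow_le_rpow (Real.rpow_nonneg hμ.le _) hge (by linarith)
    have hmax : r ^ (1 + α) ≤ max (r ^ (1 + α)) μ := le_max_left _ _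
    rw [habsfac, habsz]
    calc Real.sqrt d * r ^ 2
        = (Real.sqrt d * r ^ (1 + α)) * r ^ (1 - α) := by rw [← hr2]; ring
      _ ≤ (Real.sqrt d * max (r ^ (1 + α)) μ) * r ^ (1 - α) := by
          apply mul_le_mul_of_nonneg_right _ hrpow_pos.le
          exact mul_le_mul_of_nonneg_left hmax (Real.sqrt_nonneg d)
      _ ≤ Real.sqrt ((r ^ (1 + α)) ^ 2 + μ ^ 2 + 2 * (r ^ (1 + α)) * μ * (d - 1))
            * r ^ (1 - α) := mul_le_mul_of_nonneg_right hbound hrpow_pos.le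
      _ = r ^ (1 - α) * Real.sqrt ((r ^ (1 + α)) ^ 2 + μ ^ 2 +
            2 * (r ^ (1 + α)) * μ * (d - 1)) := by ring
end
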